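/- arXiv:2004.01035 — 5 statements merged into one kernel-verified Lean document; each statement's English description precedes it below -/
import Mathlib

section
/- Assume that d_{1,-1}, d_{1,0}, d_{1,1} are not all zero, d_{-1,-1}, d_{-1,0}, d_{-1,1} are not all zero, d_{-1,1}, d_{0,1}, d_{1,1} are not all zero, and d_{-1,-1}, d_{0,-1}, d_{1,-1} are not all zero (so that K(x,y,t) has degree 2 and valuation 0 in each of x and y). If K(x,y,t) = -f₁(x,y)·f₂(x,y) with f₁, f₂ ∈ ℂ[x,y] nonconstant, then f₁ and f₂ each have degree exactly 1 in x and degree exactly 1 in y. -/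
open MvPolynomial

noncomputable section

variable (d : ℤ → ℤ → ℝ) (t : ℝ)

/-- The kernel polynomial `K(x,y,t) = xy(1 - t·Σ_{(i,j)∈{-1,0,1}²} d_{i,j} x^i y^j)`
as an element of `ℂ[x,y] = MvPolynomial (Fin 2) ℂ` (variable `0` is `x`, variable `1` is `y`). -/
def kernelK : MvPolynomial (Fin 2) ℂ :=
  X 0 * X 1 - C ((t : ℝ) : ℂ) *
    ∑ i ∈ Finset.range 3, ∑ j ∈ Finset.range 3,
      C ((d ((i : ℤ) - 1) ((j : ℤ) - 1) : ℝ) : ℂ) * X 0 ^ i * X 1 ^ j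

/-- The standing hypotheses: the weights `d_{i,j}` for `(i,j) ∈ {-1,0,1}²` lie in `[0,1]`
and sum to `1`, `t ∈ (0,1)`, and `t` is transcendental over `ℚ(d_{i,j})`, i.e. no nonzero
polynomial with coefficients in the subfield of `ℝ` generated by the `d_{i,j}` vanishes at `t`. -/
def WalkHyp : Prop :=
  (∀ i ∈ ({-1, 0, 1} : Set ℤ), ∀ j ∈ ({-1, 0, 1} : Set ℤ), 0 ≤ d i j ∧ d i j ≤ 1) ∧
  (∑ i ∈ ({-1, 0, 1} : Finset ℤ), ∑ j ∈ ({-1, 0, 1} : Finset ℤ), d i j = 1) ∧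
  (0 < t ∧ t < 1) ∧
  (∀ p : Polynomial ℝ,
      (∀ n, p.coeff n ∈
        Subfield.closure
          {x : ℝ | ∃ i ∈ ({-1, 0, 1} : Set ℤ), ∃ j ∈ ({-1, 0, 1} : Set ℤ), x = d i j}) →
      Polynomial.eval t p = 0 → p = 0)

/-- The model is degenerate if `K` is reducible in `ℂ[x,y]`, or has degree `≤ 1` in `x`,
or degree `≤ 1` in `y`. -/
def Degenerate : Prop :=
  ¬ Irreducible (kernelK d t) ∨
    degreeOf 0 (kernelK d t) ≤ 1 ∨ degreeOf 1 (kernelK d t) ≤ 1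

/-- The bihomogenized kernel
`K̄(x₀,x₁,y₀,y₁) = x₀x₁y₀y₁ - t Σ_{i,j=0}^{2} d_{i-1,j-1} x₀^i x₁^{2-i} y₀^j y₁^{2-j}`,
with variables `0 ↦ x₀`, `1 ↦ x₁`, `2 ↦ y₀`, `3 ↦ y₁`. -/
def kernelKbar : MvPolynomial (Fin 4) ℂ :=
  X 0 * X 1 * X 2 * X 3 - C ((t : ℝ) : ℂ) *
    ∑ i ∈ Finset.range 3, ∑ j ∈ Finset.range 3,
      C ((d ((i : ℤ) - 1) ((j : ℤ) - 1) : ℝ) : ℂ) *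
        X 0 ^ i * X 1 ^ (2 - i) * X 2 ^ j * X 3 ^ (2 - j)

/-- `([a:b],[c:e])` lies on the kernel curve `Ē_t ⊆ ℙ¹(ℂ)×ℙ¹(ℂ)`. -/
def OnKernelCurve (a b c e : ℂ) : Prop :=
  eval ![a, b, c, e] (kernelKbar d t) = 0

/-- `([a:b],[c:e])` is a singular point of the kernel curve `Ē_t`: it lies on `Ē_t`
and all four partial derivatives of `K̄` vanish there. -/
def SingularAt (a b c e : ℂ) : Prop :=
  OnKernelCurve d t a b c e ∧
    ∀ k : Fin 4, eval ![a, b, c, e] (pderiv k (kernelKbar d t)) = 0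

/-- `Ā₁(x₀,x₁)`: the coefficient of `y₀²` in `K̄`. -/
def Abar1 : MvPolynomial (Fin 2) ℂ :=
  -(C ((t : ℝ) : ℂ)) *
    (C ((d (-1) 1 : ℝ) : ℂ) * X 1 ^ 2 + C ((d 0 1 : ℝ) : ℂ) * X 0 * X 1 +
      C ((d 1 1 : ℝ) : ℂ) * X 0 ^ 2)

/-- `B̄₁(x₀,x₁)`: the coefficient of `y₀y₁` in `K̄`. -/
def Bbar1 : MvPolynomial (Fin 2) ℂ :=
  X 0 * X 1 - C ((t : ℝ) : ℂ) *
    (C ((d (-1) 0 : ℝ) : ℂ) * X 1 ^ 2 + C ((d 0 0 : ℝ) : ℂ) * X 0 * X 1 +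
      C ((d 1 0 : ℝ) : ℂ) * X 0 ^ 2)

/-- `C̄₁(x₀,x₁)`: the coefficient of `y₁²` in `K̄`. -/
def Cbar1 : MvPolynomial (Fin 2) ℂ :=
  -(C ((t : ℝ) : ℂ)) *
    (C ((d (-1) (-1) : ℝ) : ℂ) * X 1 ^ 2 + C ((d 0 (-1) : ℝ) : ℂ) * X 0 * X 1 +
      C ((d 1 (-1) : ℝ) : ℂ) * X 0 ^ 2)

/-- The discriminant `Δ₁(x₀,x₁) = B̄₁² - 4Ā₁C̄₁`, homogeneous of degree 4. -/
def Delta1 : MvPolynomial (Fin 2) ℂ :=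
  Bbar1 d t ^ 2 - 4 * Abar1 d t * Cbar1 d t

/-- `Ā₂(y₀,y₁)`: the coefficient of `x₀²` in `K̄`. -/
def Abar2 : MvPolynomial (Fin 2) ℂ :=
  -(C ((t : ℝ) : ℂ)) *
    (C ((d 1 (-1) : ℝ) : ℂ) * X 1 ^ 2 + C ((d 1 0 : ℝ) : ℂ) * X 0 * X 1 +
      C ((d 1 1 : ℝ) : ℂ) * X 0 ^ 2)

/-- `B̄₂(y₀,y₁)`: the coefficient of `x₀x₁` in `K̄`. -/
def Bbar2 : MvPolynomial (Fin 2) ℂ :=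
  X 0 * X 1 - C ((t : ℝ) : ℂ) *
    (C ((d 0 (-1) : ℝ) : ℂ) * X 1 ^ 2 + C ((d 0 0 : ℝ) : ℂ) * X 0 * X 1 +
      C ((d 0 1 : ℝ) : ℂ) * X 0 ^ 2)

/-- `C̄₂(y₀,y₁)`: the coefficient of `x₁²` in `K̄`. -/
def Cbar2 : MvPolynomial (Fin 2) ℂ :=
  -(C ((t : ℝ) : ℂ)) *
    (C ((d (-1) (-1) : ℝ) : ℂ) * X 1 ^ 2 + C ((d (-1) 0 : ℝ) : ℂ) * X 0 * X 1 +
      C ((d (-1) 1 : ℝ) : ℂ) * X 0 ^ 2)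

/-- The discriminant `Δ₂(y₀,y₁) = B̄₂² - 4Ā₂C̄₂`, homogeneous of degree 4. -/
def Delta2 : MvPolynomial (Fin 2) ℂ :=
  Bbar2 d t ^ 2 - 4 * Abar2 d t * Cbar2 d t

/-- `[a:b] ∈ ℙ¹(ℂ)` is a double root of the homogeneous polynomial `p`:
`(bX - aY)²` divides `p(X,Y)`. -/
def IsDoubleRootAt (a b : ℂ) (p : MvPolynomial (Fin 2) ℂ) : Prop :=
  (C b * X 0 - C a * X 1) ^ 2 ∣ p

/-- The step set of the model is included in a closed half plane whose boundary passes
through the origin. -/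
def StepSetInHalfPlane : Prop :=
  ∃ u v : ℝ, (u, v) ≠ (0, 0) ∧
    ∀ i ∈ ({-1, 0, 1} : Set ℤ), ∀ j ∈ ({-1, 0, 1} : Set ℤ),
      (i, j) ≠ (0, 0) → d i j ≠ 0 → 0 ≤ u * (i : ℝ) + v * (j : ℝ)

/-- `α₂ = β₂` for the first family of (G0). -/
def alpha2 : ℝ := 1 - 2*t*(d 0 0) + t^2*(d 0 0)^2 - 4*t^2*(d (-1) 1)*(d 1 (-1))

/-- `α₃` for the first family of (G0). -/
def alpha3 : ℝ := 2*t^2*(d 1 0)*(d 0 0) - 2*t*(d 1 0) - 4*t^2*(d 0 1)*(d 1 (-1))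

/-- `α₄` for the first family of (G0). -/
def alpha4 : ℝ := t^2*((d 1 0)^2 - 4*(d 1 1)*(d 1 (-1)))

/-- `β₃` for the first family of (G0). -/
def beta3 : ℝ := 2*t^2*(d 0 1)*(d 0 0) - 2*t*(d 0 1) - 4*t^2*(d 1 0)*(d (-1) 1)

/-- `β₄` for the first family of (G0). -/
def beta4 : ℝ := t^2*((d 0 1)^2 - 4*(d 1 1)*(d (-1) 1))

/-- The kernel polynomial as a function `ℂ × ℂ → ℂ`:
`K(x,y,t) = xy - t Σ_{i,j=0}^{2} d_{i-1,j-1} x^i y^j`. -/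
def kernelKfun (x y : ℂ) : ℂ :=
  x * y - ((t : ℝ) : ℂ) *
    ∑ i ∈ Finset.range 3, ∑ j ∈ Finset.range 3,
      ((d ((i : ℤ) - 1) ((j : ℤ) - 1) : ℝ) : ℂ) * x ^ i * y ^ j

/-! If a factor `f` of `K` had degree `0` in `x`, it would be a nonconstant polynomial in `y`
alone, so `K(x, y₀) = 0` for all `x` at a root `y₀` of `f`. Reading off the coefficients of
`x²` and `x` shows that `y₀` is algebraic over the field generated by the weights (`y₀ = 0` is
excluded by the boundary hypothesis on the row `j = -1`) and that
`t = y₀ / (d_{0,-1} + d_{0,0} y₀ + d_{0,1} y₀²)`, contradicting the transcendence of `t`.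
So both factors have positive degree in `x`, and as these degrees add up to `deg_x K ≤ 2`, both
are `1`. The `y`-direction is the same argument for the transposed weights. -/

namespace MvPolynomial

variable {σ R k : Type*} [CommSemiring R] [Field k]

theorem eval_update_of_degreeOf_eq_zero [DecidableEq σ] {f : MvPolynomial σ R} {i : σ}
    (hi : degreeOf i f = 0) (v : σ → R) (a : R) : eval (Function.update v i a) f = eval v f := by
  refine hom_congr_vars (by ext; simp) (fun j hj _ => ?_) rfl
  have hji : j ≠ i := by rintro rfl; exact (mem_vars_iff_degreeOf_ne_zero.mp hj) hi
  simp [Function.update_of_ne hji]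

theorem exists_eval_eq_zero_of_totalDegree_ne_zero [IsAlgClosed k] [Finite σ]
    {f : MvPolynomial σ k} (hf : f.totalDegree ≠ 0) : ∃ v : σ → k, eval v f = 0 := by
  by_contra! hv
  have hempty : zeroLocus k (Ideal.span {f}) = ∅ :=
    Set.eq_empty_of_forall_notMem fun v hmem =>
      hv v (mem_zeroLocus_iff.mp hmem f (Ideal.subset_span rfl))
  have hunit : IsUnit f := by
    have := vanishingIdeal_zeroLocus_eq_radical (K := k) (Ideal.span {f})
    rw [hempty, vanishingIdeal_empty, eq_comm, Ideal.radical_eq_top,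
      Ideal.span_singleton_eq_top] at this
    exact this
  obtain ⟨r, -, rfl⟩ := isUnit_iff_eq_C_of_isReduced.mp hunit
  exact hf (totalDegree_C r)

theorem degreeOf_ne_zero_of_dvd [DecidableEq σ] [IsAlgClosed k] [Finite σ]
    {f g : MvPolynomial σ k} (hfg : f ∣ g) (hf : f.totalDegree ≠ 0) (i : σ)
    (hg : ∀ v : σ → k, ∃ a, eval (Function.update v i a) g ≠ 0) : degreeOf i f ≠ 0 := by
  intro hi
  obtain ⟨v, hv⟩ := exists_eval_eq_zero_of_totalDegree_ne_zero hf
  obtain ⟨a, ha⟩ := hg v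
  obtain ⟨h, rfl⟩ := hfg
  rw [map_mul, eval_update_of_degreeOf_eq_zero hi, hv, zero_mul] at ha
  exact ha rfl

end MvPolynomial

theorem isAlgebraic_of_quadratic {F K : Type*} [CommRing F] [CommRing K] [Algebra F K]
    {a b c : F} (habc : ¬ (a = 0 ∧ b = 0 ∧ c = 0)) {z : K}
    (hz : algebraMap F K a + algebraMap F K b * z + algebraMap F K c * z ^ 2 = 0) :
    IsAlgebraic F z := by
  refine ⟨Polynomial.C a + Polynomial.C b * Polynomial.X + Polynomial.C c * Polynomial.X ^ 2,
    fun hp => habc ?_, by simpa using hz⟩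
  refine ⟨?_, ?_, ?_⟩
  · simpa using congr_arg (Polynomial.coeff · 0) hp
  · simpa using congr_arg (Polynomial.coeff · 1) hp
  · simpa using congr_arg (Polynomial.coeff · 2) hp

theorem eval_kernelK (x y : ℂ) :
    eval ![x, y] (kernelK d t) =
      x * y - t * ((d (-1) (-1) + d (-1) 0 * y + d (-1) 1 * y ^ 2)
        + (d 0 (-1) + d 0 0 * y + d 0 1 * y ^ 2) * x
        + (d 1 (-1) + d 1 0 * y + d 1 1 * y ^ 2) * x ^ 2) := by
  simp only [kernelK, Finset.sum_range_succ, Finset.sum_range_zero, map_sub, map_mul, map_add,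
    map_pow, zero_add, eval_C, eval_X, Matrix.cons_val_zero, Matrix.cons_val_one]
  norm_num only [Nat.cast_ofNat, Nat.cast_one, Nat.cast_zero]
  ring

theorem eval_kernelK_transpose (x y : ℂ) :
    eval ![x, y] (kernelK (fun i j => d j i) t) = eval ![y, x] (kernelK d t) := by
  rw [eval_kernelK, eval_kernelK]
  ring

theorem degreeOf_kernelK_le (i : Fin 2) : degreeOf i (kernelK d t) ≤ 2 := by
  have hX : ∀ j, degreeOf i (X j : MvPolynomial (Fin 2) ℂ) ≤ 1 := fun j => by
    rw [degreeOf_X]; split_ifs <;> simp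
  rw [kernelK]
  refine (degreeOf_sub_le _ _ _).trans (max_le ?_ ?_)
  · exact (degreeOf_mul_le _ _ _).trans (add_le_add (hX 0) (hX 1))
  refine (degreeOf_C_mul_le _ _ _).trans ?_
  refine (degreeOf_sum_le _ _ _).trans (Finset.sup_le fun a ha => ?_)
  refine (degreeOf_sum_le _ _ _).trans (Finset.sup_le fun b hb => ?_)
  rw [Finset.mem_range] at ha hb
  refine (degreeOf_mul_le _ _ _).trans ?_
  refine (add_le_add_left (degreeOf_C_mul_le _ _ _) _).trans ?_
  fin_cases i <;> simp [degreeOf_X_pow_of_ne] <;> omega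

def weightField : Subfield ℝ :=
  Subfield.closure
    {x : ℝ | ∃ i ∈ ({-1, 0, 1} : Set ℤ), ∃ j ∈ ({-1, 0, 1} : Set ℤ), x = d i j}

theorem weightField_transpose : weightField (fun i j => d j i) = weightField d := by
  unfold weightField
  congr 1
  ext x
  constructor <;> rintro ⟨i, hi, j, hj, rfl⟩ <;> exact ⟨j, hj, i, hi, rfl⟩

theorem mem_weightField {i j : ℤ} (hi : i ∈ ({-1, 0, 1} : Set ℤ))
    (hj : j ∈ ({-1, 0, 1} : Set ℤ)) : d i j ∈ weightField d :=
  Subfield.subset_closure ⟨i, hi, j, hj, rfl⟩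

theorem isAlgebraic_weight {i j : ℤ} (hi : i ∈ ({-1, 0, 1} : Set ℤ))
    (hj : j ∈ ({-1, 0, 1} : Set ℤ)) : IsAlgebraic (weightField d) ((d i j : ℝ) : ℂ) :=
  isAlgebraic_algebraMap (⟨d i j, mem_weightField d hi hj⟩ : weightField d)

theorem WalkHyp.transcendental (h : WalkHyp d t) : Transcendental (weightField d) (t : ℂ) := by
  refine (transcendental_algebraMap_iff (algebraMap ℝ ℂ).injective).mpr ?_
  refine transcendental_iff.mpr fun p hp => ?_
  refine Polynomial.map_injective (algebraMap (weightField d) ℝ) Subtype.val_injective ?_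
  rw [Polynomial.map_zero]
  refine h.2.2.2 _ (fun n => by rw [Polynomial.coeff_map]; exact (p.coeff n).2) ?_
  rwa [Polynomial.eval_map_algebraMap]

theorem coeffs_of_forall_eval_kernelK_eq_zero {y : ℂ}
    (hK : ∀ x, eval ![x, y] (kernelK d t) = 0) :
    (t : ℂ) * (d (-1) (-1) + d (-1) 0 * y + d (-1) 1 * y ^ 2) = 0 ∧
      y = t * (d 0 (-1) + d 0 0 * y + d 0 1 * y ^ 2) ∧
      (t : ℂ) * (d 1 (-1) + d 1 0 * y + d 1 1 * y ^ 2) = 0 := by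
  have e₀ := hK 0
  have e₁ := hK 1
  have e₂ := hK (-1)
  rw [eval_kernelK] at e₀ e₁ e₂
  refine ⟨by linear_combination -e₀, by linear_combination (e₁ - e₂) / 2,
    by linear_combination e₀ - (e₁ + e₂) / 2⟩

theorem exists_x_eval_kernelK_ne_zero (ht : Transcendental (weightField d) (t : ℂ))
    (hx2 : ¬ (d 1 (-1) = 0 ∧ d 1 0 = 0 ∧ d 1 1 = 0))
    (hy0 : ¬ (d (-1) (-1) = 0 ∧ d 0 (-1) = 0 ∧ d 1 (-1) = 0)) (y : ℂ) :
    ∃ x, eval ![x, y] (kernelK d t) ≠ 0 := by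
  by_contra! hK
  have ht0 : (t : ℂ) ≠ 0 := fun h => ht (h ▸ isAlgebraic_zero)
  obtain ⟨hrow₀, hrow₁, hrow₂⟩ := coeffs_of_forall_eval_kernelK_eq_zero d t hK
  rcases eq_or_ne y 0 with rfl | hy
  · exact hy0 ⟨by simpa [ht0] using hrow₀, by simpa [ht0] using hrow₁,
      by simpa [ht0] using hrow₂⟩
  have hy_alg : IsAlgebraic (weightField d) y :=
    isAlgebraic_of_quadratic (a := ⟨d 1 (-1), mem_weightField d (by simp) (by simp)⟩)
      (b := ⟨d 1 0, mem_weightField d (by simp) (by simp)⟩)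
      (c := ⟨d 1 1, mem_weightField d (by simp) (by simp)⟩)
      (by simpa [Subtype.ext_iff] using hx2) ((mul_eq_zero.mp hrow₂).resolve_left ht0)
  set q : ℂ := d 0 (-1) + d 0 0 * y + d 0 1 * y ^ 2
  have hq_alg : IsAlgebraic (weightField d) q :=
    ((isAlgebraic_weight d (by simp) (by simp)).add
      ((isAlgebraic_weight d (by simp) (by simp)).mul hy_alg)).add
      ((isAlgebraic_weight d (by simp) (by simp)).mul (hy_alg.pow 2))
  have hq : q ≠ 0 := fun h => hy (by rw [hrow₁, h, mul_zero])
  refine ht ?_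
  rw [show (t : ℂ) = y * q⁻¹ by rw [hrow₁, mul_inv_cancel_right₀ hq]]
  exact hy_alg.mul hq_alg.inv

theorem exists_y_eval_kernelK_ne_zero (ht : Transcendental (weightField d) (t : ℂ))
    (hx0 : ¬ (d (-1) (-1) = 0 ∧ d (-1) 0 = 0 ∧ d (-1) 1 = 0))
    (hy2 : ¬ (d (-1) 1 = 0 ∧ d 0 1 = 0 ∧ d 1 1 = 0)) (x : ℂ) :
    ∃ y, eval ![x, y] (kernelK d t) ≠ 0 := by
  rw [← weightField_transpose] at ht
  obtain ⟨y, hy⟩ := exists_x_eval_kernelK_ne_zero (fun i j => d j i) t ht hy2 hx0 x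
  exact ⟨y, by rwa [eval_kernelK_transpose] at hy⟩

theorem degreeOf_zero_ne_zero_of_dvd_kernelK (ht : Transcendental (weightField d) (t : ℂ))
    (hx2 : ¬ (d 1 (-1) = 0 ∧ d 1 0 = 0 ∧ d 1 1 = 0))
    (hy0 : ¬ (d (-1) (-1) = 0 ∧ d 0 (-1) = 0 ∧ d 1 (-1) = 0))
    {f : MvPolynomial (Fin 2) ℂ} (hf : f.totalDegree ≠ 0) (hfK : f ∣ kernelK d t) :
    degreeOf 0 f ≠ 0 := by
  refine degreeOf_ne_zero_of_dvd hfK hf 0 fun v => ?_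
  obtain ⟨x, hx⟩ := exists_x_eval_kernelK_ne_zero d t ht hx2 hy0 (v 1)
  have hv : Function.update v 0 x = ![x, v 1] := by funext j; fin_cases j <;> simp
  exact ⟨x, by rwa [hv]⟩

theorem degreeOf_one_ne_zero_of_dvd_kernelK (ht : Transcendental (weightField d) (t : ℂ))
    (hx0 : ¬ (d (-1) (-1) = 0 ∧ d (-1) 0 = 0 ∧ d (-1) 1 = 0))
    (hy2 : ¬ (d (-1) 1 = 0 ∧ d 0 1 = 0 ∧ d 1 1 = 0))
    {f : MvPolynomial (Fin 2) ℂ} (hf : f.totalDegree ≠ 0) (hfK : f ∣ kernelK d t) :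
    degreeOf 1 f ≠ 0 := by
  refine degreeOf_ne_zero_of_dvd hfK hf 1 fun v => ?_
  obtain ⟨y, hy⟩ := exists_y_eval_kernelK_ne_zero d t ht hx0 hy2 (v 0)
  have hv : Function.update v 1 y = ![v 0, y] := by funext j; fin_cases j <;> simp
  exact ⟨y, by rwa [hv]⟩

/-- if the weights along each of the four boundary lines are not all zero
and `K = -f₁·f₂` with `f₁, f₂` nonconstant, then `f₁` and `f₂` each have degree
exactly `1` in `x` and degree exactly `1` in `y`. -/
theorem factors_have_bidegree_one (h : WalkHyp d t)
    (hx2 : ¬ (d 1 (-1) = 0 ∧ d 1 0 = 0 ∧ d 1 1 = 0))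
    (hx0 : ¬ (d (-1) (-1) = 0 ∧ d (-1) 0 = 0 ∧ d (-1) 1 = 0))
    (hy2 : ¬ (d (-1) 1 = 0 ∧ d 0 1 = 0 ∧ d 1 1 = 0))
    (hy0 : ¬ (d (-1) (-1) = 0 ∧ d 0 (-1) = 0 ∧ d 1 (-1) = 0))
    (f₁ f₂ : MvPolynomial (Fin 2) ℂ)
    (hf₁ : f₁.totalDegree ≠ 0) (hf₂ : f₂.totalDegree ≠ 0)
    (hK : kernelK d t = -(f₁ * f₂)) :
    degreeOf 0 f₁ = 1 ∧ degreeOf 1 f₁ = 1 ∧ degreeOf 0 f₂ = 1 ∧ degreeOf 1 f₂ = 1 := by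
  have ht := h.transcendental
  have hdvd₁ : f₁ ∣ kernelK d t := ⟨-f₂, by rw [hK, mul_neg]⟩
  have hdvd₂ : f₂ ∣ kernelK d t := ⟨-f₁, by rw [hK, mul_neg, mul_comm]⟩
  have hf₁0 : f₁ ≠ 0 := by rintro rfl; exact hf₁ totalDegree_zero
  have hf₂0 : f₂ ≠ 0 := by rintro rfl; exact hf₂ totalDegree_zero
  have hsum (i : Fin 2) : degreeOf i f₁ + degreeOf i f₂ ≤ 2 := by
    rw [← degreeOf_mul_eq hf₁0 hf₂0, ← degreeOf_neg, ← hK]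
    exact degreeOf_kernelK_le d t i
  have hsum₀ := hsum 0
  have hsum₁ := hsum 1
  have hx₁ := degreeOf_zero_ne_zero_of_dvd_kernelK d t ht hx2 hy0 hf₁ hdvd₁
  have hx₂ := degreeOf_zero_ne_zero_of_dvd_kernelK d t ht hx2 hy0 hf₂ hdvd₂
  have hy₁ := degreeOf_one_ne_zero_of_dvd_kernelK d t ht hx0 hy2 hf₁ hdvd₁
  have hy₂ := degreeOf_one_ne_zero_of_dvd_kernelK d t ht hx0 hy2 hf₂ hdvd₂
  omega

end
end

section
/- Assume that d_{1,-1}, d_{1,0}, d_{1,1} are not all zero, d_{-1,-1}, d_{-1,0}, d_{-1,1} are not all zero, d_{-1,1}, d_{0,1}, d_{1,1} are not all zero, and d_{-1,-1}, d_{0,-1}, d_{1,-1} are not all zero. If K(x,y,t) = -f₁(x,y)·f₂(x,y) with f₁, f₂ ∈ ℂ[x,y] nonconstant, then f₁ and f₂ are irreducible in the ring ℂ[x,y]. -/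
open MvPolynomial

noncomputable section

variable (d : ℤ → ℤ → ℝ) (t : ℝ)

/-!
If `f₁ = a * b` with non-units `a`, `b` (or likewise `f₂`), `K` is a product of three
non-units whose degrees in `x` add up to at most `2`, so one factor does not involve `x`.
Over `ℂ` it has a root `y₀`, and `K` vanishes on the whole line `y = y₀`. Writing
`K(x, y₀) = x y₀ - t (L + M x + R x²)`, this means `L = R = 0` and `y₀ = t M`. As the left column `d_{-1,·}` is nonzero, `L = 0` makes
`y₀` algebraic over `ℚ(d_{i,j})`; so is `M`, and the transcendence of `t` forces `M = 0`, hence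
`y₀ = 0`. Then `L = M = R = 0` at `y₀ = 0` says that the bottom row `d_{·,-1}` vanishes.
-/

theorem MvPolynomial.not_isUnit_of_totalDegree_ne_zero {σ K : Type*} [Field K]
    {p : MvPolynomial σ K} (h : p.totalDegree ≠ 0) : ¬IsUnit p := fun hu => h <| by
  obtain ⟨r, -, rfl⟩ := isUnit_iff_eq_C_of_isReduced.mp hu
  exact totalDegree_C r

theorem MvPolynomial.exists_eval_eq_zero_of_vars_subset {σ K : Type*} [Field K] [IsAlgClosed K]
    {p : MvPolynomial σ K} (hp : ¬IsUnit p) {i : σ} (hvars : p.vars ⊆ {i}) :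
    ∃ a : K, ∀ v : σ → K, v i = a → eval v p = 0 := by
  obtain ⟨q, rfl⟩ := exists_rename_eq_of_vars_subset_range p (fun _ : Unit => i)
    (fun _ _ _ => rfl) (fun j hj => by simpa using hvars hj)
  have hq : ¬IsUnit (uniqueAlgEquiv K Unit q) := fun hu => hp <| by
    simpa only [AlgEquiv.symm_apply_apply] using
      (hu.map (uniqueAlgEquiv K Unit).symm).map (rename fun _ : Unit => i)
  obtain ⟨a, ha⟩ := IsAlgClosed.exists_root _ (mt Polynomial.isUnit_iff_degree_eq_zero.mpr hq)
  refine ⟨a, fun v hv => ?_⟩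
  rw [eval_rename, Function.comp_def, hv, ← eval₂_id, ← eval₂_const_uniqueAlgEquiv]
  exact ha

theorem exists_forall_eval_eq_zero_of_dvd {f s : MvPolynomial (Fin 2) ℂ} (hs : ¬IsUnit s)
    (hs₀ : degreeOf 0 s = 0) (hsf : s ∣ f) : ∃ b, ∀ a, eval ![a, b] f = 0 := by
  have hvars : s.vars ⊆ {1} := fun j hj => by
    have := mem_vars_iff_degreeOf_ne_zero.mp hj
    fin_cases j <;> simp_all
  obtain ⟨b, hb⟩ := exists_eval_eq_zero_of_vars_subset hs hvars
  obtain ⟨g, rfl⟩ := hsf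
  exact ⟨b, fun a => by rw [map_mul, hb _ rfl, zero_mul]⟩

theorem ne_mul_mul_of_not_isUnit {f : MvPolynomial (Fin 2) ℂ} (hdeg : degreeOf 0 f ≤ 2)
    (hline : ∀ b, ∃ a, eval ![a, b] f ≠ 0) {p q r : MvPolynomial (Fin 2) ℂ}
    (hp : ¬IsUnit p) (hq : ¬IsUnit q) (hr : ¬IsUnit r) : f ≠ p * q * r := by
  rintro rfl
  have hpqr : p * q * r ≠ 0 := fun h => by
    obtain ⟨a, ha⟩ := hline 0
    simp [h] at ha
  have hpq := left_ne_zero_of_mul hpqr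
  rw [degreeOf_mul_eq hpq (right_ne_zero_of_mul hpqr),
    degreeOf_mul_eq (left_ne_zero_of_mul hpq) (right_ne_zero_of_mul hpq)] at hdeg
  obtain ⟨s, hs, hs₀, hsf⟩ : ∃ s, ¬IsUnit s ∧ degreeOf 0 s = 0 ∧ s ∣ p * q * r := by
    rcases (by omega : degreeOf 0 p = 0 ∨ degreeOf 0 q = 0 ∨ degreeOf 0 r = 0) with h | h | h
    · exact ⟨p, hp, h, dvd_mul_of_dvd_left (dvd_mul_right p q) r⟩
    · exact ⟨q, hq, h, dvd_mul_of_dvd_left (dvd_mul_left q p) r⟩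
    · exact ⟨r, hr, h, dvd_mul_left r _⟩
  obtain ⟨b, hb⟩ := exists_forall_eval_eq_zero_of_dvd hs hs₀ hsf
  obtain ⟨a, ha⟩ := hline b
  exact ha (hb a)

theorem transcendental_of_forall_eval_eq_zero {K : Type*} [Field K] {F : Subfield K} {t : K}
    (h : ∀ p : Polynomial K, (∀ n, p.coeff n ∈ F) → p.eval t = 0 → p = 0) :
    Transcendental F t := by
  rintro ⟨q, hq, hqt⟩
  refine hq (Polynomial.map_injective F.subtype Subtype.val_injective ?_)
  rw [Polynomial.map_zero]
  exact h _ (fun n => by simp) (by rw [Polynomial.eval_map]; exact hqt)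

section Transcendence

variable {F : Subfield ℝ}

theorem isAlgebraic_of_quadratic_eq_zero {a b c : ℝ} (ha : a ∈ F) (hb : b ∈ F) (hc : c ∈ F)
    (hne : ¬(a = 0 ∧ b = 0 ∧ c = 0)) {z : ℂ} (hz : a + b * z + c * z ^ 2 = 0) :
    IsAlgebraic F z := by
  refine ⟨.C ⟨a, ha⟩ + .C ⟨b, hb⟩ * .X + .C ⟨c, hc⟩ * .X ^ 2, fun h => hne ?_, ?_⟩
  · have h₀ := congrArg (Polynomial.coeff · 0) h
    have h₁ := congrArg (Polynomial.coeff · 1) h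
    have h₂ := congrArg (Polynomial.coeff · 2) h
    simp [Polynomial.coeff_X] at h₀ h₁ h₂
    exact ⟨congrArg Subtype.val h₀, congrArg Subtype.val h₁, congrArg Subtype.val h₂⟩
  · simp only [map_add, map_mul, map_pow, Polynomial.aeval_C, Polynomial.aeval_X]
    exact hz

theorem isAlgebraic_quadratic {a b c : ℝ} (ha : a ∈ F) (hb : b ∈ F) (hc : c ∈ F) {z : ℂ}
    (hz : IsAlgebraic F z) : IsAlgebraic F ((a : ℂ) + b * z + c * z ^ 2) :=
  ((isAlgebraic_algebraMap (⟨a, ha⟩ : F)).add ((isAlgebraic_algebraMap (⟨b, hb⟩ : F)).mul hz)).add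
    ((isAlgebraic_algebraMap (⟨c, hc⟩ : F)).mul (hz.pow 2))

/-- Otherwise `t = z / w` would be algebraic. -/
theorem eq_zero_of_eq_mul_of_transcendental (ht : Transcendental F t) {z w : ℂ}
    (hz : IsAlgebraic F z) (hw : IsAlgebraic F w) (h : z = t * w) : w = 0 := by
  by_contra hw₀
  refine (transcendental_algebraMap_iff (A := ℂ) Complex.ofReal_injective).mpr ht ?_
  have ht_eq : algebraMap ℝ ℂ t = z * w⁻¹ := by rw [h, mul_inv_cancel_right₀ hw₀]; rfl
  exact ht_eq ▸ hz.mul (IsAlgebraic.inv_iff.mpr hw)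

end Transcendence

theorem degreeOf_zero_kernelK_le : degreeOf 0 (kernelK d t) ≤ 2 := by
  rw [← natDegree_finSuccEquiv]
  simp only [kernelK, Finset.sum_range_succ, Finset.sum_range_zero, map_sub, map_mul, map_add,
    map_pow, finSuccEquiv_X_zero, ← algebraMap_eq, AlgEquiv.commutes, zero_add]
  rw [show (1 : Fin 2) = Fin.succ 0 from rfl, finSuccEquiv_X_succ]
  compute_degree

theorem exists_eval_kernelK_ne_zero {F : Subfield ℝ} (ht : Transcendental F t)
    (hd : ∀ i ∈ ({-1, 0, 1} : Set ℤ), ∀ j ∈ ({-1, 0, 1} : Set ℤ), d i j ∈ F)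
    (hx0 : ¬ (d (-1) (-1) = 0 ∧ d (-1) 0 = 0 ∧ d (-1) 1 = 0))
    (hy0 : ¬ (d (-1) (-1) = 0 ∧ d 0 (-1) = 0 ∧ d 1 (-1) = 0)) (y : ℂ) :
    ∃ x, eval ![x, y] (kernelK d t) ≠ 0 := by
  by_contra! hK
  have ht₀ : (t : ℂ) ≠ 0 := by
    exact_mod_cast fun h : t = 0 => ht (h ▸ isAlgebraic_zero)
  have hK₀ := hK 0
  have hK₁ := hK 1
  have hKneg := hK (-1)
  simp only [eval_kernelK] at hK₀ hK₁ hKneg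
  set L : ℂ := d (-1) (-1) + d (-1) 0 * y + d (-1) 1 * y ^ 2
  set M : ℂ := d 0 (-1) + d 0 0 * y + d 0 1 * y ^ 2
  set R : ℂ := d 1 (-1) + d 1 0 * y + d 1 1 * y ^ 2
  have hL : L = 0 := (mul_eq_zero.mp (by linear_combination -hK₀)).resolve_left ht₀
  have hR : R = 0 :=
    (mul_eq_zero.mp (by linear_combination hK₀ - (hK₁ + hKneg) / 2)).resolve_left ht₀
  have hM : y = t * M := by linear_combination (hK₁ - hKneg) / 2
  have hy : IsAlgebraic F y :=
    isAlgebraic_of_quadratic_eq_zero (hd _ (by simp) _ (by simp)) (hd _ (by simp) _ (by simp))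
      (hd _ (by simp) _ (by simp)) hx0 hL
  have hM₀ : M = 0 := eq_zero_of_eq_mul_of_transcendental t ht hy
    (isAlgebraic_quadratic (hd _ (by simp) _ (by simp)) (hd _ (by simp) _ (by simp))
      (hd _ (by simp) _ (by simp)) hy) hM
  have hy₀ : y = 0 := by rw [hM, hM₀, mul_zero]
  simp only [L, M, R, hy₀] at hL hM₀ hR
  exact hy0 ⟨by simpa using hL, by simpa using hM₀, by simpa using hR⟩

theorem factors_irreducible (h : WalkHyp d t)
    (hx0 : ¬ (d (-1) (-1) = 0 ∧ d (-1) 0 = 0 ∧ d (-1) 1 = 0))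
    (hy0 : ¬ (d (-1) (-1) = 0 ∧ d 0 (-1) = 0 ∧ d 1 (-1) = 0))
    (f₁ f₂ : MvPolynomial (Fin 2) ℂ)
    (hf₁ : f₁.totalDegree ≠ 0) (hf₂ : f₂.totalDegree ≠ 0)
    (hK : kernelK d t = -(f₁ * f₂)) :
    Irreducible f₁ ∧ Irreducible f₂ := by
  obtain ⟨-, -, -, htr⟩ := h
  have hline := exists_eval_kernelK_ne_zero d t (transcendental_of_forall_eval_eq_zero htr)
    (fun i hi j hj => Subfield.subset_closure ⟨i, hi, j, hj, rfl⟩) hx0 hy0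
  have hK₃ : ∀ p q r, ¬IsUnit p → ¬IsUnit q → ¬IsUnit r → kernelK d t ≠ p * q * r :=
    fun _ _ _ => ne_mul_mul_of_not_isUnit (degreeOf_zero_kernelK_le d t) hline
  have hu₁ := not_isUnit_of_totalDegree_ne_zero hf₁
  have hu₂ := not_isUnit_of_totalDegree_ne_zero hf₂
  refine ⟨irreducible_iff.mpr ⟨hu₁, fun a b hab => ?_⟩,
    irreducible_iff.mpr ⟨hu₂, fun a b hab => ?_⟩⟩
  · by_contra! ⟨ha, hb⟩
    exact hK₃ (-a) b f₂ (by rwa [IsUnit.neg_iff]) hb hu₂ (by rw [hK, hab]; ring)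
  · by_contra! ⟨ha, hb⟩
    exact hK₃ (-f₁) a b (by rwa [IsUnit.neg_iff]) ha hb (by rw [hK, hab]; ring)

end
end

section
/- The discriminant Δ₁ has a double root at some point of ℙ¹(ℂ) if and only if the discriminant Δ₂ has a double root at some point of ℙ¹(ℂ). -/
open MvPolynomial

noncomputable section

variable (d : ℤ → ℤ → ℝ) (t : ℝ)

namespace DRaux

/-- A binary quartic form with given coefficients. -/
def mkQ (c0 c1 c2 c3 c4 : ℂ) : MvPolynomial (Fin 2) ℂ :=
  C c0 * X 1 ^ 4 + C c1 * X 0 * X 1 ^ 3 + C c2 * X 0 ^ 2 * X 1 ^ 2 +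
    C c3 * X 0 ^ 3 * X 1 + C c4 * X 0 ^ 4

/-- The discriminant of a binary quartic. -/
def disc (c0 c1 c2 c3 c4 : ℂ) : ℂ :=
  256*c4^3*c0^3 - 192*c4^2*c3*c1*c0^2 - 128*c4^2*c2^2*c0^2
  + 144*c4^2*c2*c1^2*c0 - 27*c4^2*c1^4 + 144*c4*c3^2*c2*c0^2
  - 6*c4*c3^2*c1^2*c0 - 80*c4*c3*c2^2*c1*c0 + 18*c4*c3*c2*c1^3
  + 16*c4*c2^4*c0 - 4*c4*c2^3*c1^2 - 27*c3^4*c0^2 + 18*c3^3*c2*c1*c0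
  - 4*c3^3*c1^3 - 4*c3^2*c2^3*c0 + c3^2*c2^2*c1^2

/-- The degree-2 invariant of a binary quartic. -/
def Iq (c0 c1 c2 c3 c4 : ℂ) : ℂ := 12*c4*c0 - 3*c3*c1 + c2^2

/-- The degree-3 invariant of a binary quartic. -/
def Jq (c0 c1 c2 c3 c4 : ℂ) : ℂ :=
  72*c4*c2*c0 + 9*c3*c2*c1 - 27*c4*c1^2 - 27*c0*c3^2 - 2*c2^3

lemma disc_IJ (c0 c1 c2 c3 c4 : ℂ) :
    27 * disc c0 c1 c2 c3 c4 = 4 * Iq c0 c1 c2 c3 c4 ^ 3 - Jq c0 c1 c2 c3 c4 ^ 2 := by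
  simp only [disc, Iq, Jq]; ring

lemma eval_eq_zero_of_dr {a b : ℂ} {p : MvPolynomial (Fin 2) ℂ}
    (h : IsDoubleRootAt a b p) :
    eval ![a, b] p = 0 ∧ (∀ k : Fin 2, eval ![a, b] (pderiv k p) = 0) := by
  obtain ⟨r, rfl⟩ := h
  constructor
  · simp [mul_comm]
  · intro k
    have : pderiv k ((C b * X 0 - C a * X 1) ^ 2 * r)
        = (C b * X 0 - C a * X 1) *
          ((2 : MvPolynomial (Fin 2) ℂ) * pderiv k (C b * X 0 - C a * X 1) * r
            + (C b * X 0 - C a * X 1) * pderiv k r) := by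
      rw [pderiv_mul, pderiv_pow]; ring
    rw [this]
    simp [mul_comm]

lemma dr_scale {a b : ℂ} (hb : b ≠ 0) {p : MvPolynomial (Fin 2) ℂ}
    (h : IsDoubleRootAt a b p) : IsDoubleRootAt (a / b) 1 p := by
  obtain ⟨r, hr⟩ := h
  refine ⟨C b ^ 2 * r, ?_⟩
  rw [hr]
  have h2 : (C a : MvPolynomial (Fin 2) ℂ) = C b * C (a / b) := by
    rw [← map_mul, mul_div_cancel₀ a hb]
  rw [h2, map_one]; ring

lemma bind_mkQ (a c0 c1 c2 c3 c4 : ℂ) :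
    bind₁ ![X 0 + C a * X 1, X 1] (mkQ c0 c1 c2 c3 c4)
      = mkQ (c0 + c1*a + c2*a^2 + c3*a^3 + c4*a^4)
          (c1 + 2*c2*a + 3*c3*a^2 + 4*c4*a^3)
          (c2 + 3*c3*a + 6*c4*a^2) (c3 + 4*c4*a) c4 := by
  simp only [mkQ, map_add, map_mul, map_pow, map_ofNat, bind₁_X_right, bind₁_C_right,
    Matrix.cons_val_zero, Matrix.cons_val_one, Matrix.head_cons]
  ring

lemma eval_mkQ (c0 c1 c2 c3 c4 a b : ℂ) :
    eval ![a, b] (mkQ c0 c1 c2 c3 c4)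
      = c0*b^4 + c1*a*b^3 + c2*a^2*b^2 + c3*a^3*b + c4*a^4 := by
  simp [mkQ]

lemma eval_pd0_mkQ (c0 c1 c2 c3 c4 a b : ℂ) :
    eval ![a, b] (pderiv 0 (mkQ c0 c1 c2 c3 c4))
      = c1*b^3 + 2*c2*a*b^2 + 3*c3*a^2*b + 4*c4*a^3 := by
  simp [mkQ, pderiv_mul, pderiv_pow, pderiv_X_self, pderiv_X_of_ne]; ring

lemma eval_pd1_mkQ (c0 c1 c2 c3 c4 a b : ℂ) :
    eval ![a, b] (pderiv 1 (mkQ c0 c1 c2 c3 c4))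
      = 4*c0*b^3 + 3*c1*a*b^2 + 2*c2*a^2*b + c3*a^3 := by
  simp [mkQ, pderiv_mul, pderiv_pow, pderiv_X_self, pderiv_X_of_ne]; ring

/-- Forward direction of the main equivalence, at a finite point. -/
lemma disc_eq_zero_of_dr1 {a c0 c1 c2 c3 c4 : ℂ}
    (h : IsDoubleRootAt a 1 (mkQ c0 c1 c2 c3 c4)) : disc c0 c1 c2 c3 c4 = 0 := by
  obtain ⟨r, hr⟩ := h
  have hφ : bind₁ ![X 0 + C a * X 1, X 1] (mkQ c0 c1 c2 c3 c4)
      = (X 0 : MvPolynomial (Fin 2) ℂ) ^ 2 * bind₁ ![X 0 + C a * X 1, X 1] r := by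
    rw [hr, map_mul, map_pow]
    congr 2
    simp only [map_sub, map_mul, map_one, bind₁_X_right, bind₁_C_right,
      Matrix.cons_val_zero, Matrix.cons_val_one, Matrix.head_cons]
    ring
  rw [bind_mkQ] at hφ
  have hdr : IsDoubleRootAt 0 1 (mkQ (c0 + c1*a + c2*a^2 + c3*a^3 + c4*a^4)
      (c1 + 2*c2*a + 3*c3*a^2 + 4*c4*a^3) (c2 + 3*c3*a + 6*c4*a^2) (c3 + 4*c4*a) c4) := by
    refine ⟨bind₁ ![X 0 + C a * X 1, X 1] r, ?_⟩
    rw [hφ]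
    simp only [map_zero, map_one]
    ring
  obtain ⟨h0, hk⟩ := eval_eq_zero_of_dr hdr
  rw [eval_mkQ] at h0
  have h1 := hk 0
  rw [eval_pd0_mkQ] at h1
  have h0' : c0 + c1*a + c2*a^2 + c3*a^3 + c4*a^4 = 0 := by linear_combination h0
  have h1' : c1 + 2*c2*a + 3*c3*a^2 + 4*c4*a^3 = 0 := by linear_combination h1
  have key : disc c0 c1 c2 c3 c4
      = disc (c0 + c1*a + c2*a^2 + c3*a^3 + c4*a^4)
          (c1 + 2*c2*a + 3*c3*a^2 + 4*c4*a^3)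
          (c2 + 3*c3*a + 6*c4*a^2) (c3 + 4*c4*a) c4 := by
    simp only [disc]; ring
  rw [key, h0', h1']
  simp only [disc]; ring

lemma split_one {p : Polynomial ℂ} (h : p.natDegree ≠ 0) :
    ∃ r q, p = (Polynomial.X - Polynomial.C r) * q ∧ q.natDegree = p.natDegree - 1 := by
  have hp0 : p ≠ 0 := fun h0 => h (by simp [h0])
  have hdeg : p.degree ≠ 0 := by
    rw [Polynomial.degree_eq_natDegree hp0]
    exact_mod_cast fun hc => h (by exact_mod_cast hc)
  obtain ⟨r, hr⟩ := Complex.isAlgClosed.exists_root p hdeg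
  obtain ⟨q, hq⟩ := (Polynomial.dvd_iff_isRoot.mpr hr)
  refine ⟨r, q, hq, ?_⟩
  have hq0 : q ≠ 0 := by rintro rfl; simp [hq] at hp0
  have := Polynomial.natDegree_mul (p := Polynomial.X - Polynomial.C r) (q := q)
    (Polynomial.X_sub_C_ne_zero r) hq0
  rw [← hq, Polynomial.natDegree_X_sub_C] at this
  omega

lemma split_four {p : Polynomial ℂ} (h : p.natDegree = 4) :
    ∃ r1 r2 r3 r4 u, p = (Polynomial.X - Polynomial.C r1) * ((Polynomial.X - Polynomial.C r2) *
      ((Polynomial.X - Polynomial.C r3) * ((Polynomial.X - Polynomial.C r4) * Polynomial.C u))) := by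
  obtain ⟨r1, q1, h1, d1⟩ := split_one (by omega : p.natDegree ≠ 0)
  rw [h] at d1
  obtain ⟨r2, q2, h2, d2⟩ := split_one (by omega : q1.natDegree ≠ 0)
  rw [d1] at d2
  obtain ⟨r3, q3, h3, d3⟩ := split_one (by omega : q2.natDegree ≠ 0)
  rw [d2] at d3
  obtain ⟨r4, q4, h4, d4⟩ := split_one (by omega : q3.natDegree ≠ 0)
  rw [d3] at d4
  obtain ⟨u, hu⟩ := Polynomial.natDegree_eq_zero.mp (by omega : q4.natDegree = 0)
  exact ⟨r1, r2, r3, r4, u, by rw [h1, h2, h3, h4, ← hu]⟩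

lemma split_three {p : Polynomial ℂ} (h : p.natDegree = 3) :
    ∃ r1 r2 r3 u, p = (Polynomial.X - Polynomial.C r1) * ((Polynomial.X - Polynomial.C r2) *
      ((Polynomial.X - Polynomial.C r3) * Polynomial.C u)) := by
  obtain ⟨r1, q1, h1, d1⟩ := split_one (by omega : p.natDegree ≠ 0)
  rw [h] at d1
  obtain ⟨r2, q2, h2, d2⟩ := split_one (by omega : q1.natDegree ≠ 0)
  rw [d1] at d2
  obtain ⟨r3, q3, h3, d3⟩ := split_one (by omega : q2.natDegree ≠ 0)
  rw [d2] at d3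
  obtain ⟨u, hu⟩ := Polynomial.natDegree_eq_zero.mp (by omega : q3.natDegree = 0)
  exact ⟨r1, r2, r3, u, by rw [h1, h2, h3, ← hu]⟩

lemma expand4 (r1 r2 r3 r4 u : ℂ) :
    (Polynomial.X - Polynomial.C r1) * ((Polynomial.X - Polynomial.C r2) *
      ((Polynomial.X - Polynomial.C r3) * ((Polynomial.X - Polynomial.C r4) * Polynomial.C u)))
      = Polynomial.C (u * (r1*r2*r3*r4))
        + Polynomial.C (-(u * (r1*r2*r3 + r1*r2*r4 + r1*r3*r4 + r2*r3*r4))) * Polynomial.X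
        + Polynomial.C (u * (r1*r2 + r1*r3 + r1*r4 + r2*r3 + r2*r4 + r3*r4)) * Polynomial.X ^ 2
        + Polynomial.C (-(u * (r1 + r2 + r3 + r4))) * Polynomial.X ^ 3
        + Polynomial.C u * Polynomial.X ^ 4 := by
  simp only [map_mul, map_add, map_neg]
  ring

lemma expand3 (r1 r2 r3 u : ℂ) :
    (Polynomial.X - Polynomial.C r1) * ((Polynomial.X - Polynomial.C r2) *
      ((Polynomial.X - Polynomial.C r3) * Polynomial.C u))
      = Polynomial.C (-(u * (r1*r2*r3)))
        + Polynomial.C (u * (r1*r2 + r1*r3 + r2*r3)) * Polynomial.X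
        + Polynomial.C (-(u * (r1 + r2 + r3))) * Polynomial.X ^ 2
        + Polynomial.C u * Polynomial.X ^ 3 := by
  simp only [map_mul, map_add, map_neg]
  ring

lemma coeffs_eq4 {c0 c1 c2 c3 c4 d0 d1 d2 d3 d4 : ℂ}
    (h : (Polynomial.C c0 + Polynomial.C c1 * Polynomial.X + Polynomial.C c2 * Polynomial.X ^ 2
        + Polynomial.C c3 * Polynomial.X ^ 3 + Polynomial.C c4 * Polynomial.X ^ 4 : Polynomial ℂ)
       = Polynomial.C d0 + Polynomial.C d1 * Polynomial.X + Polynomial.C d2 * Polynomial.X ^ 2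
        + Polynomial.C d3 * Polynomial.X ^ 3 + Polynomial.C d4 * Polynomial.X ^ 4) :
    c0 = d0 ∧ c1 = d1 ∧ c2 = d2 ∧ c3 = d3 ∧ c4 = d4 := by
  refine ⟨?_, ?_, ?_, ?_, ?_⟩ <;>
    [(have := congrArg (fun p => Polynomial.coeff p 0) h);
     (have := congrArg (fun p => Polynomial.coeff p 1) h);
     (have := congrArg (fun p => Polynomial.coeff p 2) h);
     (have := congrArg (fun p => Polynomial.coeff p 3) h);
     (have := congrArg (fun p => Polynomial.coeff p 4) h)] <;>
    simpa using this

lemma coeffs_eq3 {c0 c1 c2 c3 d0 d1 d2 d3 : ℂ}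
    (h : (Polynomial.C c0 + Polynomial.C c1 * Polynomial.X + Polynomial.C c2 * Polynomial.X ^ 2
        + Polynomial.C c3 * Polynomial.X ^ 3 : Polynomial ℂ)
       = Polynomial.C d0 + Polynomial.C d1 * Polynomial.X + Polynomial.C d2 * Polynomial.X ^ 2
        + Polynomial.C d3 * Polynomial.X ^ 3) :
    c0 = d0 ∧ c1 = d1 ∧ c2 = d2 ∧ c3 = d3 := by
  refine ⟨?_, ?_, ?_, ?_⟩ <;>
    [(have := congrArg (fun p => Polynomial.coeff p 0) h);
     (have := congrArg (fun p => Polynomial.coeff p 1) h);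
     (have := congrArg (fun p => Polynomial.coeff p 2) h);
     (have := congrArg (fun p => Polynomial.coeff p 3) h)] <;>
    simpa using this

lemma dr_of_eq {p : MvPolynomial (Fin 2) ℂ} {u r s w : ℂ}
    (hp : p = C u * (X 0 - C r * X 1) * (X 0 - C r * X 1) * (X 0 - C s * X 1) * (X 0 - C w * X 1)) :
    ∃ a b : ℂ, (a, b) ≠ (0, 0) ∧ IsDoubleRootAt a b p := by
  refine ⟨r, 1, by simp, C u * (X 0 - C s * X 1) * (X 0 - C w * X 1), ?_⟩
  rw [hp, map_one]; ring

lemma dr_of_eq3 {p : MvPolynomial (Fin 2) ℂ} {u r s : ℂ}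
    (hp : p = C u * X 1 * (X 0 - C r * X 1) * (X 0 - C r * X 1) * (X 0 - C s * X 1)) :
    ∃ a b : ℂ, (a, b) ≠ (0, 0) ∧ IsDoubleRootAt a b p := by
  refine ⟨r, 1, by simp, C u * X 1 * (X 0 - C s * X 1), ?_⟩
  rw [hp, map_one]; ring

/-- Backward direction, case `c4 ≠ 0`. -/
lemma dr_of_disc_aux4 {c0 c1 c2 c3 c4 : ℂ} (h4 : c4 ≠ 0)
    (hd : disc c0 c1 c2 c3 c4 = 0) :
    ∃ a b : ℂ, (a, b) ≠ (0, 0) ∧ IsDoubleRootAt a b (mkQ c0 c1 c2 c3 c4) := by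
  have hdeg : (Polynomial.C c0 + Polynomial.C c1 * Polynomial.X + Polynomial.C c2 * Polynomial.X ^ 2
      + Polynomial.C c3 * Polynomial.X ^ 3 + Polynomial.C c4 * Polynomial.X ^ 4 : Polynomial ℂ).natDegree = 4 := by
    compute_degree!
  obtain ⟨r1, r2, r3, r4, u, hu⟩ := split_four hdeg
  rw [expand4] at hu
  obtain ⟨e0, e1, e2, e3, e4⟩ := coeffs_eq4 hu
  have hdisc : disc c0 c1 c2 c3 c4
      = u^6 * ((r1-r2)*(r1-r3)*(r1-r4)*(r2-r3)*(r2-r4)*(r3-r4))^2 := by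
    rw [e0, e1, e2, e3, e4]; simp only [disc]; ring
  have hu0 : u ≠ 0 := by rw [← e4]; exact h4
  have hprod : (r1-r2)*(r1-r3)*(r1-r4)*(r2-r3)*(r2-r4)*(r3-r4) = 0 := by
    have := hdisc.symm.trans hd
    rcases mul_eq_zero.mp this with h | h
    · exact absurd h (pow_ne_zero _ hu0)
    · exact pow_eq_zero_iff (by norm_num) |>.mp h
  have hmk : mkQ c0 c1 c2 c3 c4
      = C u * (X 0 - C r1 * X 1) * (X 0 - C r2 * X 1) * (X 0 - C r3 * X 1) * (X 0 - C r4 * X 1) := by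
    rw [show mkQ c0 c1 c2 c3 c4 = mkQ c0 c1 c2 c3 c4 from rfl]
    rw [e0, e1, e2, e3, e4]
    simp only [mkQ, map_mul, map_add, map_neg]
    ring
  rcases mul_eq_zero.mp hprod with h | h34
  rcases mul_eq_zero.mp h with h | h24
  rcases mul_eq_zero.mp h with h | h23
  rcases mul_eq_zero.mp h with h | h14
  rcases mul_eq_zero.mp h with h12 | h13
  · exact dr_of_eq (u := u) (r := r1) (s := r3) (w := r4) (by rw [hmk, ← sub_eq_zero.mp h12])
  · exact dr_of_eq (u := u) (r := r1) (s := r2) (w := r4) (by rw [hmk, ← sub_eq_zero.mp h13]; ring)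
  · exact dr_of_eq (u := u) (r := r1) (s := r2) (w := r3) (by rw [hmk, ← sub_eq_zero.mp h14]; ring)
  · exact dr_of_eq (u := u) (r := r2) (s := r1) (w := r4) (by rw [hmk, ← sub_eq_zero.mp h23]; ring)
  · exact dr_of_eq (u := u) (r := r2) (s := r1) (w := r3) (by rw [hmk, ← sub_eq_zero.mp h24]; ring)
  · exact dr_of_eq (u := u) (r := r3) (s := r1) (w := r2) (by rw [hmk, ← sub_eq_zero.mp h34]; ring)

/-- Backward direction, case `c4 = 0`, `c3 ≠ 0`. -/
lemma dr_of_disc_aux3 {c0 c1 c2 c3 : ℂ} (h3 : c3 ≠ 0)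
    (hd : disc c0 c1 c2 c3 0 = 0) :
    ∃ a b : ℂ, (a, b) ≠ (0, 0) ∧ IsDoubleRootAt a b (mkQ c0 c1 c2 c3 0) := by
  have hdeg : (Polynomial.C c0 + Polynomial.C c1 * Polynomial.X + Polynomial.C c2 * Polynomial.X ^ 2
      + Polynomial.C c3 * Polynomial.X ^ 3 : Polynomial ℂ).natDegree = 3 := by
    compute_degree!
  obtain ⟨r1, r2, r3, u, hu⟩ := split_three hdeg
  rw [expand3] at hu
  obtain ⟨e0, e1, e2, e3⟩ := coeffs_eq3 hu
  have hdisc : disc c0 c1 c2 c3 0 = u^6 * ((r1-r2)*(r1-r3)*(r2-r3))^2 := by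
    rw [e0, e1, e2, e3]; simp only [disc]; ring
  have hu0 : u ≠ 0 := by rw [← e3]; exact h3
  have hprod : (r1-r2)*(r1-r3)*(r2-r3) = 0 := by
    have := hdisc.symm.trans hd
    rcases mul_eq_zero.mp this with h | h
    · exact absurd h (pow_ne_zero _ hu0)
    · exact pow_eq_zero_iff (by norm_num) |>.mp h
  have hmk : mkQ c0 c1 c2 c3 0
      = C u * X 1 * (X 0 - C r1 * X 1) * (X 0 - C r2 * X 1) * (X 0 - C r3 * X 1) := by
    rw [e0, e1, e2, e3]
    simp only [mkQ, map_mul, map_add, map_neg, map_zero]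
    ring
  rcases mul_eq_zero.mp hprod with h | h23
  rcases mul_eq_zero.mp h with h12 | h13
  · exact dr_of_eq3 (u := u) (r := r1) (s := r3) (by rw [hmk, ← sub_eq_zero.mp h12])
  · exact dr_of_eq3 (u := u) (r := r1) (s := r2) (by rw [hmk, ← sub_eq_zero.mp h13]; ring)
  · exact dr_of_eq3 (u := u) (r := r2) (s := r1) (by rw [hmk, ← sub_eq_zero.mp h23]; ring)

/-- Backward direction, case `c4 = c3 = 0`: double root at infinity. -/
lemma dr_of_c34 (c0 c1 c2 : ℂ) :
    ∃ a b : ℂ, (a, b) ≠ (0, 0) ∧ IsDoubleRootAt a b (mkQ c0 c1 c2 0 0) := by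
  refine ⟨1, 0, by simp, C c0 * X 1 ^ 2 + C c1 * X 0 * X 1 + C c2 * X 0 ^ 2, ?_⟩
  simp only [mkQ, map_zero, map_one]
  ring

/-- A binary quartic has a double root in `ℙ¹(ℂ)` iff its discriminant vanishes. -/
lemma dr_iff_disc (c0 c1 c2 c3 c4 : ℂ) :
    (∃ a b : ℂ, (a, b) ≠ (0, 0) ∧ IsDoubleRootAt a b (mkQ c0 c1 c2 c3 c4)) ↔
      disc c0 c1 c2 c3 c4 = 0 := by
  constructor
  · rintro ⟨a, b, hab, hdr⟩
    by_cases hb : b = 0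
    · subst hb
      have ha : a ≠ 0 := fun h => hab (by rw [h])
      obtain ⟨h0, hk⟩ := eval_eq_zero_of_dr hdr
      rw [eval_mkQ] at h0
      have h1 := hk 1
      rw [eval_pd1_mkQ] at h1
      have hc4 : c4 = 0 := by
        have h' : c4 * a^4 = 0 := by linear_combination h0
        rcases mul_eq_zero.mp h' with h | h
        · exact h
        · exact absurd h (pow_ne_zero _ ha)
      have hc3 : c3 = 0 := by
        have h' : c3 * a^3 = 0 := by linear_combination h1
        rcases mul_eq_zero.mp h' with h | h
        · exact h
        · exact absurd h (pow_ne_zero _ ha)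
      rw [hc3, hc4]; simp only [disc]; ring
    · exact disc_eq_zero_of_dr1 (dr_scale hb hdr)
  · intro hd
    by_cases h4 : c4 = 0
    · subst h4
      by_cases h3 : c3 = 0
      · subst h3
        exact dr_of_c34 c0 c1 c2
      · exact dr_of_disc_aux3 h3 hd
    · exact dr_of_disc_aux4 h4 hd

lemma delta1_eq (d : ℤ → ℤ → ℝ) (t : ℝ) :
    Delta1 d t = mkQ (((t : ℝ) : ℂ)^2*((d (-1) 0 : ℝ) : ℂ)^2 + (-4)*((t : ℝ) : ℂ)^2*((d (-1) (-1) : ℝ) : ℂ)*((d (-1) 1 : ℝ) : ℂ)) ((-2)*((t : ℝ) : ℂ)*((d (-1) 0 : ℝ) : ℂ) + (-4)*((t : ℝ) : ℂ)^2*((d (-1) 1 : ℝ) : ℂ)*((d 0 (-1) : ℝ) : ℂ) + 2*((t : ℝ) : ℂ)^2*((d (-1) 0 : ℝ) : ℂ)*((d 0 0 : ℝ) : ℂ) + (-4)*((t : ℝ) : ℂ)^2*((d (-1) (-1) : ℝ) : ℂ)*((d 0 1 : ℝ) : ℂ)) (1 + (-2)*((t : ℝ) : ℂ)*((d 0 0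 : ℝ) : ℂ) + ((t : ℝ) : ℂ)^2*((d 0 0 : ℝ) : ℂ)^2 + (-4)*((t : ℝ) : ℂ)^2*((d 0 (-1) : ℝ) : ℂ)*((d 0 1 : ℝ) : ℂ) + (-4)*((t : ℝ) : ℂ)^2*((d (-1) 1 : ℝ) : ℂ)*((d 1 (-1) : ℝ) : ℂ) + 2*((t : ℝ) : ℂ)^2*((d (-1) 0 : ℝ) : ℂ)*((d 1 0 : ℝ) : ℂ) + (-4)*((t : ℝ) : ℂ)^2*((d (-1) (-1) : ℝ) : ℂ)*((d 1 1 : ℝ) : ℂ)) ((-2)*((t : ℝ) : ℂ)*((d 1 0 : ℝ) : ℂ) + (-4)*((t : ℝ) : ℂ)^2*((d 0 1 : ℝ) : ℂ)*((d 1 (-1) : ℝ) : ℂ) + 2*((t : ℝ) : ℂ)^2*((d 0 0 : ℝ) : ℂ)*((d 1 0 : ℝ) : ℂ) + (-4)*((t : ℝ) : ℂ)^2*((d 0 (-1) : ℝ) : ℂ)*((d 1 1 : ℝ) : ℂ)) (((t : ℝ) : ℂ)^2*((d 1 0 : ℝ) : ℂ)^2 + (-4)*((t : ℝ) : ℂ)^2*((d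 1 (-1) : ℝ) : ℂ)*((d 1 1 : ℝ) : ℂ)) := by
  simp only [Delta1, Abar1, Bbar1, Cbar1, mkQ, map_mul, map_add, map_sub, map_neg,
    map_pow, map_one, map_ofNat]
  ring

lemma delta2_eq (d : ℤ → ℤ → ℝ) (t : ℝ) :
    Delta2 d t = mkQ (((t : ℝ) : ℂ)^2*((d 0 (-1) : ℝ) : ℂ)^2 + (-4)*((t : ℝ) : ℂ)^2*((d (-1) (-1) : ℝ) : ℂ)*((d 1 (-1) : ℝ) : ℂ)) ((-2)*((t : ℝ) : ℂ)*((d 0 (-1) : ℝ) : ℂ) + 2*((t : ℝ) : ℂ)^2*((d 0 (-1) : ℝ) : ℂ)*((d 0 0 : ℝ) : ℂ) + (-4)*((t : ℝ) : ℂ)^2*((d (-1) 0 : ℝ) : ℂ)*((d 1 (-1) : ℝ) : ℂ) + (-4)*((t : ℝ) : ℂ)^2*((d (-1) (-1) : ℝ) : ℂ)*((d 1 0 : ℝ) : ℂ)) (1 + (-2)*((t : ℝ) : ℂ)*((d 0 0 : ℝ) : ℂ) + ((t : ℝ) : ℂ)^2*((d 0 0 : ℝ) : ℂ)^2 + 2*((t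 : ℝ) : ℂ)^2*((d 0 (-1) : ℝ) : ℂ)*((d 0 1 : ℝ) : ℂ) + (-4)*((t : ℝ) : ℂ)^2*((d (-1) 1 : ℝ) : ℂ)*((d 1 (-1) : ℝ) : ℂ) + (-4)*((t : ℝ) : ℂ)^2*((d (-1) 0 : ℝ) : ℂ)*((d 1 0 : ℝ) : ℂ) + (-4)*((t : ℝ) : ℂ)^2*((d (-1) (-1) : ℝ) : ℂ)*((d 1 1 : ℝ) : ℂ)) ((-2)*((t : ℝ) : ℂ)*((d 0 1 : ℝ) : ℂ) + 2*((t : ℝ) : ℂ)^2*((d 0 0 : ℝ) : ℂ)*((d 0 1 : ℝ) : ℂ) + (-4)*((t : ℝ) : ℂ)^2*((d (-1) 1 : ℝ) : ℂ)*((d 1 0 : ℝ) : ℂ) + (-4)*((t : ℝ) : ℂ)^2*((d (-1) 0 : ℝ) : ℂ)*((d 1 1 : ℝ) : ℂ)) (((t : ℝ) : ℂ)^2*((d 0 1 : ℝ) : ℂ)^2 + (-4)*((t : ℝ) : ℂ)^2*((d (-1) 1 : ℝ) : ℂ)*((d 1 1 : ℝ) : ℂ)) := by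
  simp only [Delta2, Abar2, Bbar2, Cbar2, mkQ, map_mul, map_add, map_sub, map_neg,
    map_pow, map_one, map_ofNat]
  ring

lemma Ieq (d : ℤ → ℤ → ℝ) (t : ℝ) :
    Iq (((t : ℝ) : ℂ)^2*((d (-1) 0 : ℝ) : ℂ)^2 + (-4)*((t : ℝ) : ℂ)^2*((d (-1) (-1) : ℝ) : ℂ)*((d (-1) 1 : ℝ) : ℂ)) ((-2)*((t : ℝ) : ℂ)*((d (-1) 0 : ℝ) : ℂ) + (-4)*((t : ℝ) : ℂ)^2*((d (-1) 1 : ℝ) : ℂ)*((d 0 (-1) : ℝ) : ℂ) + 2*((t : ℝ) : ℂ)^2*((d (-1) 0 : ℝ) : ℂ)*((d 0 0 : ℝ) : ℂ) + (-4)*((t : ℝ) : ℂ)^2*((d (-1) (-1) : ℝ) : ℂ)*((d 0 1 : ℝ) : ℂ)) (1 + (-2)*((t : ℝ) : ℂ)*((d 0 0 : ℝ) : ℂ) + ((t : ℝ) : ℂ)^2*((d 0 0 : ℝ) : ℂ)^2 + (-4)*((t : ℝ) : ℂ)^2*((d 0 (-1) : ℝ) : ℂ)*((d 0 1 : ℝ)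 : ℂ) + (-4)*((t : ℝ) : ℂ)^2*((d (-1) 1 : ℝ) : ℂ)*((d 1 (-1) : ℝ) : ℂ) + 2*((t : ℝ) : ℂ)^2*((d (-1) 0 : ℝ) : ℂ)*((d 1 0 : ℝ) : ℂ) + (-4)*((t : ℝ) : ℂ)^2*((d (-1) (-1) : ℝ) : ℂ)*((d 1 1 : ℝ) : ℂ)) ((-2)*((t : ℝ) : ℂ)*((d 1 0 : ℝ) : ℂ) + (-4)*((t : ℝ) : ℂ)^2*((d 0 1 : ℝ) : ℂ)*((d 1 (-1) : ℝ) : ℂ) + 2*((t : ℝ) : ℂ)^2*((d 0 0 : ℝ) : ℂ)*((d 1 0 : ℝ) : ℂ) + (-4)*((t : ℝ) : ℂ)^2*((d 0 (-1) : ℝ) : ℂ)*((d 1 1 : ℝ) : ℂ)) (((t : ℝ) : ℂ)^2*((d 1 0 : ℝ) : ℂ)^2 + (-4)*((t : ℝ) : ℂ)^2*((d 1 (-1) : ℝ) : ℂ)*((d 1 1 : ℝ) : ℂ)) = Iq (((t : ℝ) : ℂ)^2*((d 0 (-1) : ℝ) : ℂ)^2 + (-4)*((t : ℝ) : ℂ)^2*((d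 (-1) (-1) : ℝ) : ℂ)*((d 1 (-1) : ℝ) : ℂ)) ((-2)*((t : ℝ) : ℂ)*((d 0 (-1) : ℝ) : ℂ) + 2*((t : ℝ) : ℂ)^2*((d 0 (-1) : ℝ) : ℂ)*((d 0 0 : ℝ) : ℂ) + (-4)*((t : ℝ) : ℂ)^2*((d (-1) 0 : ℝ) : ℂ)*((d 1 (-1) : ℝ) : ℂ) + (-4)*((t : ℝ) : ℂ)^2*((d (-1) (-1) : ℝ) : ℂ)*((d 1 0 : ℝ) : ℂ)) (1 + (-2)*((t : ℝ) : ℂ)*((d 0 0 : ℝ) : ℂ) + ((t : ℝ) : ℂ)^2*((d 0 0 : ℝ) : ℂ)^2 + 2*((t : ℝ) : ℂ)^2*((d 0 (-1) : ℝ) : ℂ)*((d 0 1 : ℝ) : ℂ) + (-4)*((t : ℝ) : ℂ)^2*((d (-1) 1 : ℝ) : ℂ)*((d 1 (-1) : ℝ) : ℂ) + (-4)*((t : ℝ) : ℂ)^2*((d (-1) 0 : ℝ) : ℂ)*((d 1 0 : ℝ) : ℂ) + (-4)*((t : ℝ) : ℂ)^2*((d (-1) (-1) : ℝ) : ℂ)*((d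 1 1 : ℝ) : ℂ)) ((-2)*((t : ℝ) : ℂ)*((d 0 1 : ℝ) : ℂ) + 2*((t : ℝ) : ℂ)^2*((d 0 0 : ℝ) : ℂ)*((d 0 1 : ℝ) : ℂ) + (-4)*((t : ℝ) : ℂ)^2*((d (-1) 1 : ℝ) : ℂ)*((d 1 0 : ℝ) : ℂ) + (-4)*((t : ℝ) : ℂ)^2*((d (-1) 0 : ℝ) : ℂ)*((d 1 1 : ℝ) : ℂ)) (((t : ℝ) : ℂ)^2*((d 0 1 : ℝ) : ℂ)^2 + (-4)*((t : ℝ) : ℂ)^2*((d (-1) 1 : ℝ) : ℂ)*((d 1 1 : ℝ) : ℂ)) := by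
  simp only [Iq]; ring

lemma Jeq (d : ℤ → ℤ → ℝ) (t : ℝ) :
    Jq (((t : ℝ) : ℂ)^2*((d (-1) 0 : ℝ) : ℂ)^2 + (-4)*((t : ℝ) : ℂ)^2*((d (-1) (-1) : ℝ) : ℂ)*((d (-1) 1 : ℝ) : ℂ)) ((-2)*((t : ℝ) : ℂ)*((d (-1) 0 : ℝ) : ℂ) + (-4)*((t : ℝ) : ℂ)^2*((d (-1) 1 : ℝ) : ℂ)*((d 0 (-1) : ℝ) : ℂ) + 2*((t : ℝ) : ℂ)^2*((d (-1) 0 : ℝ) : ℂ)*((d 0 0 : ℝ) : ℂ) + (-4)*((t : ℝ) : ℂ)^2*((d (-1) (-1) : ℝ) : ℂ)*((d 0 1 : ℝ) : ℂ)) (1 + (-2)*((t : ℝ) : ℂ)*((d 0 0 : ℝ) : ℂ) + ((t : ℝ) : ℂ)^2*((d 0 0 : ℝ) : ℂ)^2 + (-4)*((t : ℝ) : ℂ)^2*((d 0 (-1) : ℝ) : ℂ)*((d 0 1 : ℝ) : ℂ) + (-4)*((t : ℝ) : ℂ)^2*((d (-1) 1 : ℝ) : ℂ)*((d 1 (-1)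 : ℝ) : ℂ) + 2*((t : ℝ) : ℂ)^2*((d (-1) 0 : ℝ) : ℂ)*((d 1 0 : ℝ) : ℂ) + (-4)*((t : ℝ) : ℂ)^2*((d (-1) (-1) : ℝ) : ℂ)*((d 1 1 : ℝ) : ℂ)) ((-2)*((t : ℝ) : ℂ)*((d 1 0 : ℝ) : ℂ) + (-4)*((t : ℝ) : ℂ)^2*((d 0 1 : ℝ) : ℂ)*((d 1 (-1) : ℝ) : ℂ) + 2*((t : ℝ) : ℂ)^2*((d 0 0 : ℝ) : ℂ)*((d 1 0 : ℝ) : ℂ) + (-4)*((t : ℝ) : ℂ)^2*((d 0 (-1) : ℝ) : ℂ)*((d 1 1 : ℝ) : ℂ)) (((t : ℝ) : ℂ)^2*((d 1 0 : ℝ) : ℂ)^2 + (-4)*((t : ℝ) : ℂ)^2*((d 1 (-1) : ℝ) : ℂ)*((d 1 1 : ℝ) : ℂ)) = Jq (((t : ℝ) : ℂ)^2*((d 0 (-1) : ℝ) : ℂ)^2 + (-4)*((t : ℝ) : ℂ)^2*((d (-1) (-1) : ℝ) : ℂ)*((d 1 (-1) : ℝ) : ℂ)) ((-2)*((t : ℝ)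 : ℂ)*((d 0 (-1) : ℝ) : ℂ) + 2*((t : ℝ) : ℂ)^2*((d 0 (-1) : ℝ) : ℂ)*((d 0 0 : ℝ) : ℂ) + (-4)*((t : ℝ) : ℂ)^2*((d (-1) 0 : ℝ) : ℂ)*((d 1 (-1) : ℝ) : ℂ) + (-4)*((t : ℝ) : ℂ)^2*((d (-1) (-1) : ℝ) : ℂ)*((d 1 0 : ℝ) : ℂ)) (1 + (-2)*((t : ℝ) : ℂ)*((d 0 0 : ℝ) : ℂ) + ((t : ℝ) : ℂ)^2*((d 0 0 : ℝ) : ℂ)^2 + 2*((t : ℝ) : ℂ)^2*((d 0 (-1) : ℝ) : ℂ)*((d 0 1 : ℝ) : ℂ) + (-4)*((t : ℝ) : ℂ)^2*((d (-1) 1 : ℝ) : ℂ)*((d 1 (-1) : ℝ) : ℂ) + (-4)*((t : ℝ) : ℂ)^2*((d (-1) 0 : ℝ) : ℂ)*((d 1 0 : ℝ) : ℂ) + (-4)*((t : ℝ) : ℂ)^2*((d (-1) (-1) : ℝ) : ℂ)*((d 1 1 : ℝ) : ℂ)) ((-2)*((t : ℝ) : ℂ)*((d 0 1 : ℝ) :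 ℂ) + 2*((t : ℝ) : ℂ)^2*((d 0 0 : ℝ) : ℂ)*((d 0 1 : ℝ) : ℂ) + (-4)*((t : ℝ) : ℂ)^2*((d (-1) 1 : ℝ) : ℂ)*((d 1 0 : ℝ) : ℂ) + (-4)*((t : ℝ) : ℂ)^2*((d (-1) 0 : ℝ) : ℂ)*((d 1 1 : ℝ) : ℂ)) (((t : ℝ) : ℂ)^2*((d 0 1 : ℝ) : ℂ)^2 + (-4)*((t : ℝ) : ℂ)^2*((d (-1) 1 : ℝ) : ℂ)*((d 1 1 : ℝ) : ℂ)) := by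
  simp only [Jq]; ring

lemma disc_eq (d : ℤ → ℤ → ℝ) (t : ℝ) :
    disc (((t : ℝ) : ℂ)^2*((d (-1) 0 : ℝ) : ℂ)^2 + (-4)*((t : ℝ) : ℂ)^2*((d (-1) (-1) : ℝ) : ℂ)*((d (-1) 1 : ℝ) : ℂ)) ((-2)*((t : ℝ) : ℂ)*((d (-1) 0 : ℝ) : ℂ) + (-4)*((t : ℝ) : ℂ)^2*((d (-1) 1 : ℝ) : ℂ)*((d 0 (-1) : ℝ) : ℂ) + 2*((t : ℝ) : ℂ)^2*((d (-1) 0 : ℝ) : ℂ)*((d 0 0 : ℝ) : ℂ) + (-4)*((t : ℝ) : ℂ)^2*((d (-1) (-1) : ℝ) : ℂ)*((d 0 1 : ℝ) : ℂ)) (1 + (-2)*((t : ℝ) : ℂ)*((d 0 0 : ℝ) : ℂ) + ((t : ℝ) : ℂ)^2*((d 0 0 : ℝ) : ℂ)^2 + (-4)*((t : ℝ) : ℂ)^2*((d 0 (-1) : ℝ) : ℂ)*((d 0 1 : ℝ) : ℂ) + (-4)*((t : ℝ) : ℂ)^2*((d (-1) 1 : ℝ) : ℂ)*((d 1 (-1)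 : ℝ) : ℂ) + 2*((t : ℝ) : ℂ)^2*((d (-1) 0 : ℝ) : ℂ)*((d 1 0 : ℝ) : ℂ) + (-4)*((t : ℝ) : ℂ)^2*((d (-1) (-1) : ℝ) : ℂ)*((d 1 1 : ℝ) : ℂ)) ((-2)*((t : ℝ) : ℂ)*((d 1 0 : ℝ) : ℂ) + (-4)*((t : ℝ) : ℂ)^2*((d 0 1 : ℝ) : ℂ)*((d 1 (-1) : ℝ) : ℂ) + 2*((t : ℝ) : ℂ)^2*((d 0 0 : ℝ) : ℂ)*((d 1 0 : ℝ) : ℂ) + (-4)*((t : ℝ) : ℂ)^2*((d 0 (-1) : ℝ) : ℂ)*((d 1 1 : ℝ) : ℂ)) (((t : ℝ) : ℂ)^2*((d 1 0 : ℝ) : ℂ)^2 + (-4)*((t : ℝ) : ℂ)^2*((d 1 (-1) : ℝ) : ℂ)*((d 1 1 : ℝ) : ℂ)) = disc (((t : ℝ) : ℂ)^2*((d 0 (-1) : ℝ) : ℂ)^2 + (-4)*((t : ℝ) : ℂ)^2*((d (-1) (-1) : ℝ) : ℂ)*((d 1 (-1) : ℝ) : ℂ)) ((-2)*((t : ℝ)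 : ℂ)*((d 0 (-1) : ℝ) : ℂ) + 2*((t : ℝ) : ℂ)^2*((d 0 (-1) : ℝ) : ℂ)*((d 0 0 : ℝ) : ℂ) + (-4)*((t : ℝ) : ℂ)^2*((d (-1) 0 : ℝ) : ℂ)*((d 1 (-1) : ℝ) : ℂ) + (-4)*((t : ℝ) : ℂ)^2*((d (-1) (-1) : ℝ) : ℂ)*((d 1 0 : ℝ) : ℂ)) (1 + (-2)*((t : ℝ) : ℂ)*((d 0 0 : ℝ) : ℂ) + ((t : ℝ) : ℂ)^2*((d 0 0 : ℝ) : ℂ)^2 + 2*((t : ℝ) : ℂ)^2*((d 0 (-1) : ℝ) : ℂ)*((d 0 1 : ℝ) : ℂ) + (-4)*((t : ℝ) : ℂ)^2*((d (-1) 1 : ℝ) : ℂ)*((d 1 (-1) : ℝ) : ℂ) + (-4)*((t : ℝ) : ℂ)^2*((d (-1) 0 : ℝ) : ℂ)*((d 1 0 : ℝ) : ℂ) + (-4)*((t : ℝ) : ℂ)^2*((d (-1) (-1) : ℝ) : ℂ)*((d 1 1 : ℝ) : ℂ)) ((-2)*((t : ℝ) : ℂ)*((d 0 1 : ℝ) :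 ℂ) + 2*((t : ℝ) : ℂ)^2*((d 0 0 : ℝ) : ℂ)*((d 0 1 : ℝ) : ℂ) + (-4)*((t : ℝ) : ℂ)^2*((d (-1) 1 : ℝ) : ℂ)*((d 1 0 : ℝ) : ℂ) + (-4)*((t : ℝ) : ℂ)^2*((d (-1) 0 : ℝ) : ℂ)*((d 1 1 : ℝ) : ℂ)) (((t : ℝ) : ℂ)^2*((d 0 1 : ℝ) : ℂ)^2 + (-4)*((t : ℝ) : ℂ)^2*((d (-1) 1 : ℝ) : ℂ)*((d 1 1 : ℝ) : ℂ)) := by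
  have h := disc_IJ (((t : ℝ) : ℂ)^2*((d (-1) 0 : ℝ) : ℂ)^2 + (-4)*((t : ℝ) : ℂ)^2*((d (-1) (-1) : ℝ) : ℂ)*((d (-1) 1 : ℝ) : ℂ)) ((-2)*((t : ℝ) : ℂ)*((d (-1) 0 : ℝ) : ℂ) + (-4)*((t : ℝ) : ℂ)^2*((d (-1) 1 : ℝ) : ℂ)*((d 0 (-1) : ℝ) : ℂ) + 2*((t : ℝ) : ℂ)^2*((d (-1) 0 : ℝ) : ℂ)*((d 0 0 : ℝ) : ℂ) + (-4)*((t : ℝ) : ℂ)^2*((d (-1) (-1) : ℝ) : ℂ)*((d 0 1 : ℝ) : ℂ)) (1 + (-2)*((t : ℝ) : ℂ)*((d 0 0 : ℝ) : ℂ) + ((t : ℝ) : ℂ)^2*((d 0 0 : ℝ) : ℂ)^2 + (-4)*((t : ℝ) : ℂ)^2*((d 0 (-1) : ℝ) : ℂ)*((d 0 1 : ℝ) : ℂ) + (-4)*((t : ℝ) : ℂ)^2*((d (-1) 1 : ℝ) : ℂ)*((d 1 (-1) : ℝ) : ℂ) + 2*((t : ℝ) : ℂ)^2*((d (-1) 0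 : ℝ) : ℂ)*((d 1 0 : ℝ) : ℂ) + (-4)*((t : ℝ) : ℂ)^2*((d (-1) (-1) : ℝ) : ℂ)*((d 1 1 : ℝ) : ℂ)) ((-2)*((t : ℝ) : ℂ)*((d 1 0 : ℝ) : ℂ) + (-4)*((t : ℝ) : ℂ)^2*((d 0 1 : ℝ) : ℂ)*((d 1 (-1) : ℝ) : ℂ) + 2*((t : ℝ) : ℂ)^2*((d 0 0 : ℝ) : ℂ)*((d 1 0 : ℝ) : ℂ) + (-4)*((t : ℝ) : ℂ)^2*((d 0 (-1) : ℝ) : ℂ)*((d 1 1 : ℝ) : ℂ)) (((t : ℝ) : ℂ)^2*((d 1 0 : ℝ) : ℂ)^2 + (-4)*((t : ℝ) : ℂ)^2*((d 1 (-1) : ℝ) : ℂ)*((d 1 1 : ℝ) : ℂ))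
  rw [Ieq, Jeq, ← disc_IJ] at h
  exact mul_left_cancel₀ (by norm_num : (27 : ℂ) ≠ 0) h

end DRaux

/-- `Δ₁` has a double root at some point of `ℙ¹(ℂ)` if and only if `Δ₂`
has a double root at some point of `ℙ¹(ℂ)`. -/
theorem delta1_double_root_iff_delta2_double_root (h : WalkHyp d t) :
    (∃ a b : ℂ, (a, b) ≠ (0, 0) ∧ IsDoubleRootAt a b (Delta1 d t)) ↔
      (∃ a b : ℂ, (a, b) ≠ (0, 0) ∧ IsDoubleRootAt a b (Delta2 d t)) := by
  rw [DRaux.delta1_eq, DRaux.delta2_eq, DRaux.dr_iff_disc, DRaux.dr_iff_disc,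
    DRaux.disc_eq d t]

end
end

section
/- For a nondegenerate model of walk, the kernel curve Ē_t has at most one singular point. -/
open MvPolynomial

noncomputable section

variable (d : ℤ → ℤ → ℝ) (t : ℝ)

/-! A singular point `([a:b],[c:e])` of `Ē_t` is a singular zero of the binary quadratic form
`(x₀, x₁) ↦ K̄(x₀, x₁, c, e)`, so the discriminant `Δ₂` and both its partial derivatives vanish at
`(c, e)`: `[c:e]` is a double root of the quartic form `Δ₂`. Two singular points with distinct
`y`-coordinates would give `Δ₂` two double roots in `ℙ¹`, forcing `Δ₂(y, 1)` to be a perfect square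
in `ℂ[y]`; then `K`, viewed as a quadratic in `x` over `ℂ[y]`, factors, which contradicts its
irreducibility. Transposing the weights exchanges the roles of `x` and `y`. -/

section BinaryQuadraticForm

variable {R : Type*} [CommRing R] [IsDomain R] {A B C A' B' C' c e : R}

theorem eq_zero_of_mul_sq_eq_zero {x : R} (hce : (c, e) ≠ (0, 0))
    (hc : x * c ^ 2 = 0) (he : x * e ^ 2 = 0) : x = 0 := by
  by_contra hx
  exact hce (by simp_all)

theorem discrim_eq_zero_of_singular_zero (hce : (c, e) ≠ (0, 0))
    (hc : 2 * A * c + B * e = 0) (he : B * c + 2 * C * e = 0) : discrim A B C = 0 := by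
  refine eq_zero_of_mul_sq_eq_zero hce ?_ ?_ <;> rw [discrim]
  · linear_combination c * (B * he - 2 * C * hc)
  · linear_combination e * (B * hc - 2 * A * he)

/-- `2BB' - 4A'C - 4AC'` is the derivative of `discrim` at `(A, B, C)` in the direction
`(A', B', C')`. -/
theorem discrim_variation_eq_zero (hce : (c, e) ≠ (0, 0))
    (hc : 2 * A * c + B * e = 0) (he : B * c + 2 * C * e = 0)
    (h' : A' * c ^ 2 + B' * (c * e) + C' * e ^ 2 = 0) :
    2 * B * B' - 4 * A' * C - 4 * A * C' = 0 := by
  refine eq_zero_of_mul_sq_eq_zero hce ?_ ?_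
  · linear_combination (-4 * C) * h' + 2 * B' * c * he + C' * (2 * e * he - 2 * c * hc)
  · linear_combination (-4 * A) * h' + 2 * B' * e * hc + A' * (2 * c * hc - 2 * e * he)

end BinaryQuadraticForm

namespace MvPolynomial

variable {R : Type*} [CommSemiring R] {σ τ : Type*}

def IsSingularZero (F : MvPolynomial σ R) (v : σ → R) : Prop :=
  eval v F = 0 ∧ ∀ i, eval v (pderiv i F) = 0

theorem IsSingularZero.rename_equiv {F : MvPolynomial σ R} {v : σ → R}
    (h : IsSingularZero F v) (f : σ ≃ τ) : IsSingularZero (rename f F) (v ∘ f.symm) := by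
  refine ⟨by rw [eval_rename]; simpa [Function.comp_def] using h.1, fun j => ?_⟩
  rw [← f.apply_symm_apply j, pderiv_rename f.injective, eval_rename]
  simpa [Function.comp_def] using h.2 (f.symm j)

end MvPolynomial

namespace Polynomial

variable {K : Type*} [Field K]

theorem aeval_pderiv_zero (q : MvPolynomial (Fin 2) K) :
    MvPolynomial.aeval ![(X : K[X]), 1] (pderiv 0 q) =
      derivative (MvPolynomial.aeval ![(X : K[X]), 1] q) := by
  induction q using MvPolynomial.induction_on with
  | C a => simp
  | add p q hp hq => simp [hp, hq]
  | mul_X p i h =>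
    fin_cases i
    · simp [Derivation.leibniz, derivative_mul, h]
      ring
    · simp [Derivation.leibniz, h]

theorem pderiv_zero_homogenize {p : K[X]} {n : ℕ} (hp : p.natDegree ≤ n) :
    pderiv 0 (p.homogenize n) = (derivative p).homogenize (n - 1) :=
  (homogenize_eq_of_isHomogeneous ((isHomogeneous_homogenize p).pderiv)
    (by rw [aeval_pderiv_zero, aeval_homogenize_X_one p hp])).symm

theorem eval_homogenize_of_eq_zero (p : K[X]) (n : ℕ) {x : Fin 2 → K} (hx : x 1 = 0) :
    MvPolynomial.eval x (p.homogenize n) = p.coeff n * x 0 ^ n := by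
  rw [homogenize, MvPolynomial.eval_sum, Finset.sum_eq_single (n, 0)]
  · simp [MvPolynomial.eval_monomial, Finsupp.prod_fintype, mul_comm]
  · rintro ⟨k, l⟩ hkl hne
    have hl : l ≠ 0 := by
      rintro rfl
      simp_all
    simp [MvPolynomial.eval_monomial, Finsupp.prod_fintype, hx, hl]
  · simp

theorem eval_pderiv_one_homogenize_of_eq_zero (p : K[X]) {n : ℕ} (hn : n ≠ 0)
    {x : Fin 2 → K} (hx : x 1 = 0) :
    MvPolynomial.eval x (pderiv 1 (p.homogenize n)) = p.coeff (n - 1) * x 0 ^ (n - 1) := by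
  rw [homogenize, map_sum, MvPolynomial.eval_sum, Finset.sum_eq_single (n - 1, 1)]
  · simp [MvPolynomial.eval_monomial, Finsupp.prod_fintype, pderiv_monomial, mul_comm]
  · rintro ⟨k, l⟩ hkl hne
    have hl : l ≠ 1 := by
      rintro rfl
      simp_all
      omega
    rcases Nat.lt_or_gt_of_ne hl with h0 | h2
    · simp [Nat.lt_one_iff.mp h0, pderiv_monomial]
    · simp [MvPolynomial.eval_monomial, Finsupp.prod_fintype, pderiv_monomial, hx,
        Nat.sub_ne_zero_of_lt h2]
  · simp; omega

theorem sq_dvd_of_isRoot_derivative {p : K[X]} {r : K} (h : p.IsRoot r)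
    (h' : (derivative p).IsRoot r) : (X - C r) ^ 2 ∣ p := by
  rcases eq_or_ne p 0 with rfl | hp
  · exact dvd_zero _
  exact (le_rootMultiplicity_iff hp).mp ((one_lt_rootMultiplicity_iff_isRoot hp).mpr ⟨h, h'⟩)

theorem sq_dvd_of_isSingularZero_homogenize {p : K[X]} {n : ℕ} (hp : p.natDegree ≤ n)
    {a b : K} (hb : b ≠ 0) (h : IsSingularZero (p.homogenize n) ![a, b]) :
    (X - C (a / b)) ^ 2 ∣ p := by
  have hroot := h.1
  have hroot' := h.2 0
  rw [eval_homogenize hp _ (by simpa using hb)] at hroot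
  rw [pderiv_zero_homogenize hp,
    eval_homogenize ((natDegree_derivative_le p).trans (Nat.sub_le_sub_right hp 1)) _
      (by simpa using hb)] at hroot'
  simp only [Matrix.cons_val_zero, Matrix.cons_val_one, mul_eq_zero, pow_eq_zero_iff',
    hb, false_and, or_false] at hroot hroot'
  exact sq_dvd_of_isRoot_derivative hroot hroot'

theorem natDegree_le_of_isSingularZero_homogenize {p : K[X]} {n : ℕ} (hp : p.natDegree ≤ n)
    (hn : n ≠ 0) {a : K} (ha : a ≠ 0) (h : IsSingularZero (p.homogenize n) ![a, 0]) :
    p.natDegree ≤ n - 2 := by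
  have hn0 := h.1
  have hn1 := h.2 1
  rw [eval_homogenize_of_eq_zero _ _ rfl] at hn0
  rw [eval_pderiv_one_homogenize_of_eq_zero _ hn rfl] at hn1
  simp only [Matrix.cons_val_zero, mul_eq_zero, pow_eq_zero_iff', ha, false_and, or_false]
    at hn0 hn1
  rw [natDegree_le_iff_coeff_eq_zero]
  intro N hN
  rcases (show N = n - 1 ∨ N = n ∨ n < N by omega) with rfl | rfl | hN
  exacts [hn1, hn0, coeff_eq_zero_of_natDegree_lt (hp.trans_lt hN)]

theorem isSquare_of_sq_dvd [IsAlgClosed K] {p s : K[X]} (h : s ^ 2 ∣ p)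
    (hdeg : p.natDegree ≤ 2 * s.natDegree) : IsSquare p := by
  obtain ⟨w, rfl⟩ := h
  rcases eq_or_ne (s ^ 2 * w) 0 with h0 | h0
  · rw [h0]; exact IsSquare.zero
  obtain ⟨hs, hw⟩ := mul_ne_zero_iff.mp h0
  have hw0 : w.natDegree = 0 := by
    rw [natDegree_mul hs hw, natDegree_pow] at hdeg
    omega
  obtain ⟨u, hu⟩ := IsAlgClosed.exists_pow_nat_eq (w.coeff 0) two_pos
  refine ⟨C u * s, ?_⟩
  rw [eq_C_of_natDegree_eq_zero hw0, ← hu, C_pow]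
  ring

theorem isSquare_of_two_singular_zeros_homogenize [IsAlgClosed K] {p : K[X]}
    (hp : p.natDegree ≤ 4) {a b a' b' : K} (hab : (a, b) ≠ (0, 0)) (hab' : (a', b') ≠ (0, 0))
    (hne : a * b' ≠ a' * b) (h : IsSingularZero (p.homogenize 4) ![a, b])
    (h' : IsSingularZero (p.homogenize 4) ![a', b']) : IsSquare p := by
  wlog hb : b ≠ 0 generalizing a b a' b'
  · have hb' : b' ≠ 0 := by rintro rfl; simp_all
    exact this hab' hab (Ne.symm hne) h' h hb'
  have hr := sq_dvd_of_isSingularZero_homogenize hp hb h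
  rcases eq_or_ne b' 0 with rfl | hb'
  · have ha' : a' ≠ 0 := by rintro rfl; simp_all
    refine isSquare_of_sq_dvd hr ?_
    rw [natDegree_X_sub_C]
    exact natDegree_le_of_isSingularZero_homogenize hp four_ne_zero ha' h'
  have hr' := sq_dvd_of_isSingularZero_homogenize hp hb' h'
  have hrr' : a / b ≠ a' / b' := by
    rw [Ne, div_eq_div_iff hb hb']
    exact fun h => hne (by linear_combination h)
  refine isSquare_of_sq_dvd (s := (X - C (a / b)) * (X - C (a' / b'))) ?_ ?_
  · rw [mul_pow]
    exact ((isCoprime_X_sub_C_of_isUnit_sub (sub_ne_zero.mpr hrr').isUnit).pow).mul_dvd hr hr'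
  · rw [natDegree_mul (X_sub_C_ne_zero _) (X_sub_C_ne_zero _), natDegree_X_sub_C,
      natDegree_X_sub_C]
    exact hp

theorem not_prime_of_isSquare_discrim {R : Type*} [CommRing R] [IsDomain R]
    [NeZero (2 : R)] {a b c : R} (ha : a ≠ 0) (hsq : IsSquare (discrim a b c)) :
    ¬ Prime (C a * X ^ 2 + C b * X + C c) := by
  obtain ⟨s, hs⟩ := hsq
  have hfactor : (C a * X ^ 2 + C b * X + C c) * C (4 * a) =
      (C (2 * a) * X + C (b - s)) * (C (2 * a) * X + C (b + s)) := by
    have hs' : C (b ^ 2 - 4 * a * c) = C (s * s) := congrArg C hs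
    simp only [map_mul, map_sub, map_add, map_pow, map_ofNat] at hs' ⊢
    linear_combination -hs'
  have hlin : ∀ u, (C (2 * a) * X + C u).natDegree = 1 := fun u =>
    natDegree_linear (mul_ne_zero two_ne_zero ha)
  have hlin0 : ∀ u, C (2 * a) * X + C u ≠ 0 := fun u =>
    ne_zero_of_natDegree_gt (n := 0) (by rw [hlin u]; exact one_pos)
  intro hprime
  have hdeg := natDegree_quadratic (b := b) (c := c) ha
  rcases hprime.2.2 _ _ (Dvd.intro _ hfactor) with hdvd | hdvd <;>
  · have := natDegree_le_of_dvd hdvd (hlin0 _)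
    rw [hlin, hdeg] at this
    omega

end Polynomial

theorem isHomogeneous_quadForm {R : Type*} [CommSemiring R] (p q r : R) :
    (C p * X 1 ^ 2 + C q * X 0 * X 1 + C r * X 0 ^ 2 : MvPolynomial (Fin 2) R).IsHomogeneous 2 :=
  ((isHomogeneous_C_mul_X_pow p 1 2).add
    ((isHomogeneous_C_mul_X q 0).mul (isHomogeneous_X R 1))).add (isHomogeneous_C_mul_X_pow r 0 2)

theorem exists_eq_mul_of_mul_eq_mul {K : Type*} [Field K] {a b a' b' : K}
    (hab : (a, b) ≠ (0, 0)) (hab' : (a', b') ≠ (0, 0)) (h : a * b' = a' * b) :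
    ∃ l : K, l ≠ 0 ∧ a' = l * a ∧ b' = l * b := by
  rcases eq_or_ne a 0 with rfl | ha
  · have hb : b ≠ 0 := by rintro rfl; simp at hab
    have ha' : a' = 0 := by simpa [hb] using h.symm
    have hb' : b' ≠ 0 := by rintro rfl; simp [ha'] at hab'
    exact ⟨b' / b, div_ne_zero hb' hb, by simp [ha'], by field_simp⟩
  · have ha' : a' ≠ 0 := by
      rintro rfl
      exact hab' (by simpa [ha] using h)
    exact ⟨a' / a, div_ne_zero ha' ha, by field_simp, by field_simp; linear_combination h⟩

theorem eval_pderiv_zero_kernelKbar (a b c e : ℂ) :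
    eval ![a, b, c, e] (pderiv 0 (kernelKbar d t)) =
      2 * eval ![c, e] (Abar2 d t) * a + eval ![c, e] (Bbar2 d t) * b := by
  simp [kernelKbar, Abar2, Bbar2, Finset.sum_range_succ, pderiv_X]
  ring

theorem eval_pderiv_one_kernelKbar (a b c e : ℂ) :
    eval ![a, b, c, e] (pderiv 1 (kernelKbar d t)) =
      eval ![c, e] (Bbar2 d t) * a + 2 * eval ![c, e] (Cbar2 d t) * b := by
  simp [kernelKbar, Bbar2, Cbar2, Finset.sum_range_succ, pderiv_X]
  ring

theorem eval_pderiv_natAdd_kernelKbar (a b c e : ℂ) (i : Fin 2) :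
    eval ![a, b, c, e] (pderiv (Fin.natAdd 2 i) (kernelKbar d t)) =
      eval ![c, e] (pderiv i (Abar2 d t)) * a ^ 2 +
        eval ![c, e] (pderiv i (Bbar2 d t)) * (a * b) +
          eval ![c, e] (pderiv i (Cbar2 d t)) * b ^ 2 := by
  fin_cases i <;>
  · simp [kernelKbar, Abar2, Bbar2, Cbar2, Finset.sum_range_succ, pderiv_X]
    ring

theorem SingularAt.isSingularZero_delta2 {a b c e : ℂ} (hab : (a, b) ≠ (0, 0))
    (hs : SingularAt d t a b c e) : IsSingularZero (Delta2 d t) ![c, e] := by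
  have hx0 := hs.2 0
  have hx1 := hs.2 1
  rw [eval_pderiv_zero_kernelKbar] at hx0
  rw [eval_pderiv_one_kernelKbar] at hx1
  refine ⟨?_, fun i => ?_⟩
  · simp only [Delta2, map_sub, map_mul, map_pow, map_ofNat]
    exact discrim_eq_zero_of_singular_zero hab hx0 hx1
  · have hy := hs.2 (Fin.natAdd 2 i)
    rw [eval_pderiv_natAdd_kernelKbar] at hy
    have h4 : pderiv i (4 : MvPolynomial (Fin 2) ℂ) = 0 := by
      simpa using (pderiv i).map_natCast 4
    simp only [Delta2, map_sub, map_add, map_mul, Derivation.leibniz, Derivation.leibniz_pow,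
      h4, smul_eq_mul, nsmul_eq_mul, Nat.cast_ofNat, Nat.add_one_sub_one, pow_one, mul_zero,
      add_zero, eval_ofNat]
    linear_combination discrim_variation_eq_zero hab hx0 hx1 hy

def kernelDiscrim : Polynomial ℂ := aeval ![Polynomial.X, 1] (Delta2 d t)

theorem natDegree_kernelDiscrim_le : (kernelDiscrim d t).natDegree ≤ 4 := by
  simp only [kernelDiscrim, Delta2, Abar2, Bbar2, Cbar2, map_sub, map_mul, map_pow, map_neg,
    map_add, aeval_X, aeval_C, map_ofNat, Matrix.cons_val_zero, Matrix.cons_val_one, one_pow,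
    mul_one]
  compute_degree

theorem isHomogeneous_delta2 : (Delta2 d t).IsHomogeneous 4 := by
  have hA : (Abar2 d t).IsHomogeneous 2 := by
    rw [Abar2, neg_mul]; exact ((isHomogeneous_quadForm _ _ _).C_mul _).neg
  have hB : (Bbar2 d t).IsHomogeneous 2 :=
    ((isHomogeneous_X ℂ 0).mul (isHomogeneous_X ℂ 1)).sub ((isHomogeneous_quadForm _ _ _).C_mul _)
  have hC : (Cbar2 d t).IsHomogeneous 2 := by
    rw [Cbar2, neg_mul]; exact ((isHomogeneous_quadForm _ _ _).C_mul _).neg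
  have hA4 : (4 * Abar2 d t).IsHomogeneous 2 := by
    rw [← map_ofNat C 4]; exact hA.C_mul 4
  exact (hB.pow 2).sub (hA4.mul hC)

theorem homogenize_kernelDiscrim : (kernelDiscrim d t).homogenize 4 = Delta2 d t :=
  Polynomial.homogenize_eq_of_isHomogeneous (isHomogeneous_delta2 d t) rfl

theorem aeval_delta2_eq_aeval_kernelDiscrim :
    aeval ![(X 0 : MvPolynomial (Fin 1) ℂ), 1] (Delta2 d t) =
      Polynomial.aeval (X 0) (kernelDiscrim d t) := by
  have hv : (fun i => Polynomial.aeval (X 0) (![(Polynomial.X : Polynomial ℂ), 1] i)) =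
      ![(X 0 : MvPolynomial (Fin 1) ℂ), 1] := by
    funext i
    fin_cases i <;> simp
  rw [kernelDiscrim, ← AlgHom.comp_apply, MvPolynomial.comp_aeval, hv]

theorem finSuccEquiv_kernelK : finSuccEquiv ℂ 1 (kernelK d t) =
    Polynomial.C (aeval ![X 0, 1] (Abar2 d t)) * Polynomial.X ^ 2 +
      Polynomial.C (aeval ![X 0, 1] (Bbar2 d t)) * Polynomial.X +
        Polynomial.C (aeval ![X 0, 1] (Cbar2 d t)) := by
  have hC (r : ℂ) : finSuccEquiv ℂ 1 (C r) = Polynomial.C (C r) := by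
    simp [finSuccEquiv_apply]
  have hX : finSuccEquiv ℂ 1 (X 1) = Polynomial.C (X 0) :=
    finSuccEquiv_X_succ (R := ℂ) (n := 1) (j := 0)
  simp [kernelK, Abar2, Bbar2, Cbar2, Finset.sum_range_succ, finSuccEquiv_X_zero, hX, hC,
    MvPolynomial.algebraMap_eq]
  ring

theorem not_isSquare_kernelDiscrim (hnd : ¬ Degenerate d t) : ¬ IsSquare (kernelDiscrim d t) := by
  simp only [Degenerate, not_or, not_not, not_le] at hnd
  obtain ⟨hirr, hdeg, -⟩ := hnd
  rintro ⟨s, hs⟩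
  have hprime : Prime (finSuccEquiv ℂ 1 (kernelK d t)) :=
    (MulEquiv.prime_iff (finSuccEquiv ℂ 1).toMulEquiv).mpr hirr.prime
  rw [finSuccEquiv_kernelK] at hprime
  refine Polynomial.not_prime_of_isSquare_discrim ?_ ⟨Polynomial.aeval (X 0) s, ?_⟩ hprime
  · intro h0
    have h := natDegree_finSuccEquiv (kernelK d t)
    rw [finSuccEquiv_kernelK, h0, map_zero, zero_mul, zero_add] at h
    have := Polynomial.natDegree_linear_le (R := MvPolynomial (Fin 1) ℂ)
      (a := aeval ![X 0, 1] (Bbar2 d t)) (b := aeval ![X 0, 1] (Cbar2 d t))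
    omega
  · have h := aeval_delta2_eq_aeval_kernelDiscrim d t
    rw [hs, map_mul] at h
    rw [← h, Delta2, discrim, map_sub, map_mul, map_mul, map_pow, map_ofNat]

theorem mul_eq_mul_of_singularAt (hnd : ¬ Degenerate d t) {a b c e a' b' c' e' : ℂ}
    (hab : (a, b) ≠ (0, 0)) (hab' : (a', b') ≠ (0, 0))
    (hce : (c, e) ≠ (0, 0)) (hce' : (c', e') ≠ (0, 0))
    (hs : SingularAt d t a b c e) (hs' : SingularAt d t a' b' c' e') : c * e' = c' * e := by
  by_contra hne
  refine not_isSquare_kernelDiscrim d t hnd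
    (Polynomial.isSquare_of_two_singular_zeros_homogenize (natDegree_kernelDiscrim_le d t)
      hce hce' hne ?_ ?_)
  · rw [homogenize_kernelDiscrim]; exact hs.isSingularZero_delta2 d t hab
  · rw [homogenize_kernelDiscrim]; exact hs'.isSingularZero_delta2 d t hab'

def swapXY : Equiv.Perm (Fin 4) := Equiv.swap 0 2 * Equiv.swap 1 3

theorem kernelK_transpose :
    kernelK (fun i j => d j i) t = rename (Equiv.swap 0 1) (kernelK d t) := by
  simp [kernelK, Finset.sum_range_succ]
  ring

theorem kernelKbar_transpose :
    kernelKbar (fun i j => d j i) t = rename swapXY (kernelKbar d t) := by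
  simp [kernelKbar, swapXY, Finset.sum_range_succ, Equiv.swap_apply_def]
  ring

theorem SingularAt.transpose {a b c e : ℂ} (hs : SingularAt d t a b c e) :
    SingularAt (fun i j => d j i) t c e a b := by
  have h := IsSingularZero.rename_equiv hs swapXY
  have hv : ![a, b, c, e] ∘ swapXY.symm = ![c, e, a, b] := by
    funext i
    fin_cases i <;> rfl
  rw [hv, ← kernelKbar_transpose] at h
  exact h

theorem not_degenerate_transpose (hnd : ¬ Degenerate d t) :
    ¬ Degenerate (fun i j => d j i) t := by
  have hdeg (k : Fin 2) := degreeOf_rename_of_injective (p := kernelK d t)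
    (Equiv.swap (0 : Fin 2) 1).injective k
  simp only [Degenerate, kernelK_transpose, not_or, not_not, not_le] at hnd ⊢
  refine ⟨?_, ?_, ?_⟩
  · exact (MulEquiv.irreducible_iff (renameEquiv ℂ (Equiv.swap (0 : Fin 2) 1)).toMulEquiv).mpr
      hnd.1
  · have h := hdeg 1
    simp only [Equiv.swap_apply_right] at h
    omega
  · have h := hdeg 0
    simp only [Equiv.swap_apply_left] at h
    omega

theorem at_most_one_singular_point (hnd : ¬ Degenerate d t)
    (a b c e a' b' c' e' : ℂ)
    (hab : (a, b) ≠ (0, 0)) (hce : (c, e) ≠ (0, 0))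
    (hab' : (a', b') ≠ (0, 0)) (hce' : (c', e') ≠ (0, 0))
    (hs : SingularAt d t a b c e) (hs' : SingularAt d t a' b' c' e') :
    ∃ lam mu : ℂ, lam ≠ 0 ∧ mu ≠ 0 ∧
      a' = lam * a ∧ b' = lam * b ∧ c' = mu * c ∧ e' = mu * e := by
  obtain ⟨lam, hlam, ha', hb'⟩ := exists_eq_mul_of_mul_eq_mul hab hab'
    (mul_eq_mul_of_singularAt (fun i j => d j i) t (not_degenerate_transpose d t hnd) hce hce' hab hab'
      hs.transpose hs'.transpose)
  obtain ⟨mu, hmu, hc', he'⟩ := exists_eq_mul_of_mul_eq_mul hce hce'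
    (mul_eq_mul_of_singularAt d t hnd hab hab' hce hce' hs hs')
  exact ⟨lam, mu, hlam, hmu, ha', hb', hc', he'⟩

end
end

section
/- For a nondegenerate model of walk, if ([a:b],[c:d]) is a singular point of the kernel curve Ē_t, then Δ₁ has a double root at [a:b] and Δ₂ has a double root at [c:d]. -/
open MvPolynomial


section Aux

private lemma quad_delta (α₂ α₁ α₀ β₂ β₁ β₀ γ₂ γ₁ γ₀ : ℂ) :
    (C β₂ * X 0^2 + C β₁ * X 0 * X 1 + C β₀ * X 1^2)^2
      - 4*(C α₂*X 0^2+C α₁*X 0*X 1+C α₀*X 1^2)*(C γ₂*X 0^2+C γ₁*X 0*X 1+C γ₀*X 1^2)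
    = (C (β₂^2-4*α₂*γ₂) * X 0^4 + C (2*β₂*β₁-4*(α₂*γ₁+α₁*γ₂)) * X 0^3*X 1
        + C (β₁^2+2*β₂*β₀-4*(α₂*γ₀+α₁*γ₁+α₀*γ₂)) * X 0^2*X 1^2
        + C (2*β₁*β₀-4*(α₁*γ₀+α₀*γ₁)) * X 0*X 1^3
        + C (β₀^2-4*α₀*γ₀) * X 1^4 : MvPolynomial (Fin 2) ℂ) := by
  simp only [map_sub, map_add, map_mul, map_pow, map_one, map_ofNat]
  ring

private lemma scalar_aux (A B Cc A0 B0 C0 A1 B1 C1 c e : ℂ)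
    (hce : (c, e) ≠ (0, 0))
    (hP0 : A0*c^2 + B0*c*e + C0*e^2 = 0)
    (hP1 : A1*c^2 + B1*c*e + C1*e^2 = 0)
    (hP2 : 2*A*c + B*e = 0)
    (hP3 : B*c + 2*Cc*e = 0) :
    B^2 - 4*A*Cc = 0 ∧ (2*B*B0 - 4*A0*Cc - 4*A*C0 = 0) ∧ (2*B*B1 - 4*A1*Cc - 4*A*C1 = 0) := by
  by_cases he : e = 0
  · have hc : c ≠ 0 := by rintro rfl; exact hce (by simp [he])
    refine ⟨?_, ?_, ?_⟩
    · have : (B^2 - 4*A*Cc) * c^2 = 0 := by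
        linear_combination (B*c)*hP3 + (-2*Cc*c)*hP2
      have := mul_eq_zero.1 this
      simpa [pow_eq_zero_iff, hc] using this
    · have : (2*B*B0 - 4*A0*Cc - 4*A*C0) * c^2 = 0 := by
        linear_combination (-4*Cc)*hP0 + (2*B0*c+2*C0*e)*hP3 + (-2*C0*c)*hP2
      have := mul_eq_zero.1 this
      simpa [pow_eq_zero_iff, hc] using this
    · have : (2*B*B1 - 4*A1*Cc - 4*A*C1) * c^2 = 0 := by
        linear_combination (-4*Cc)*hP1 + (2*B1*c+2*C1*e)*hP3 + (-2*C1*c)*hP2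
      have := mul_eq_zero.1 this
      simpa [pow_eq_zero_iff, hc] using this
  · refine ⟨?_, ?_, ?_⟩
    · have : (B^2 - 4*A*Cc) * e^2 = 0 := by
        linear_combination (B*e)*hP2 + (-2*A*e)*hP3
      have := mul_eq_zero.1 this
      simpa [pow_eq_zero_iff, he] using this
    · have : (2*B*B0 - 4*A0*Cc - 4*A*C0) * e^2 = 0 := by
        linear_combination (-4*A)*hP0 + (2*B0*e+2*A0*c)*hP2 + (-2*A0*e)*hP3
      have := mul_eq_zero.1 this
      simpa [pow_eq_zero_iff, he] using this
    · have : (2*B*B1 - 4*A1*Cc - 4*A*C1) * e^2 = 0 := by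
        linear_combination (-4*A)*hP1 + (2*B1*e+2*A1*c)*hP2 + (-2*A1*e)*hP3
      have := mul_eq_zero.1 this
      simpa [pow_eq_zero_iff, he] using this

private lemma aux_div (a b δ0 δ1 δ2 δ3 δ4 : ℂ) (hab : (a, b) ≠ (0, 0))
    (h0 : δ4*a^4+δ3*a^3*b+δ2*a^2*b^2+δ1*a*b^3+δ0*b^4 = 0)
    (h1 : 4*δ4*a^3+3*δ3*a^2*b+2*δ2*a*b^2+δ1*b^3 = 0)
    (h2 : δ3*a^3+2*δ2*a^2*b+3*δ1*a*b^2+4*δ0*b^3 = 0) :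
    ((C b * X 0 - C a * X 1)^2 : MvPolynomial (Fin 2) ℂ) ∣
      (C δ4 * X 0^4 + C δ3 * X 0^3 * X 1 + C δ2 * X 0^2 * X 1^2 + C δ1 * X 0 * X 1^3 + C δ0 * X 1^4) := by
  by_cases hb : b = 0
  · have ha : a ≠ 0 := by rintro rfl; exact hab (by simp [hb])
    refine ⟨C ((a:ℂ)^4)⁻¹ * (C (δ2*a^2+2*b*δ1*a+3*b^2*δ0) * X 0^2 + C ((δ1*a+2*b*δ0)*a) * X 0 * X 1 + C (δ0*a^2) * X 1^2), ?_⟩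
    have key : (C (a^4) : MvPolynomial (Fin 2) ℂ) * (C δ4 * X 0^4 + C δ3 * X 0^3 * X 1 + C δ2 * X 0^2 * X 1^2 + C δ1 * X 0 * X 1^3 + C δ0 * X 1^4)
        = (C b * X 0 - C a * X 1)^2 * (C (δ2*a^2+2*b*δ1*a+3*b^2*δ0) * X 0^2 + C ((δ1*a+2*b*δ0)*a) * X 0 * X 1 + C (δ0*a^2) * X 1^2) := by
      apply MvPolynomial.funext
      intro x
      simp only [map_add, map_sub, map_mul, map_pow, eval_C, eval_X]
      linear_combination (a * x 1 * (x 0)^3 - b * (x 0)^4) * h2 + (x 0)^4 * h0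
    calc (C δ4 * X 0^4 + C δ3 * X 0^3 * X 1 + C δ2 * X 0^2 * X 1^2 + C δ1 * X 0 * X 1^3 + C δ0 * X 1^4 : MvPolynomial (Fin 2) ℂ)
        = C (a^4)⁻¹ * (C (a^4) * (C δ4 * X 0^4 + C δ3 * X 0^3 * X 1 + C δ2 * X 0^2 * X 1^2 + C δ1 * X 0 * X 1^3 + C δ0 * X 1^4)) := by
          rw [← mul_assoc, ← map_mul, inv_mul_cancel₀ (pow_ne_zero 4 ha), map_one, one_mul]
      _ = _ := by rw [key]; ring
  · refine ⟨C ((b:ℂ)^4)⁻¹ * (C (δ4*b^2) * X 0^2 + C ((δ3*b+2*a*δ4)*b) * X 0 * X 1 + C (δ2*b^2+2*a*δ3*b+3*a^2*δ4) * X 1^2), ?_⟩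
    have key : (C (b^4) : MvPolynomial (Fin 2) ℂ) * (C δ4 * X 0^4 + C δ3 * X 0^3 * X 1 + C δ2 * X 0^2 * X 1^2 + C δ1 * X 0 * X 1^3 + C δ0 * X 1^4)
        = (C b * X 0 - C a * X 1)^2 * (C (δ4*b^2) * X 0^2 + C ((δ3*b+2*a*δ4)*b) * X 0 * X 1 + C (δ2*b^2+2*a*δ3*b+3*a^2*δ4) * X 1^2) := by
      apply MvPolynomial.funext
      intro x
      simp only [map_add, map_sub, map_mul, map_pow, eval_C, eval_X]
      linear_combination (b * x 0 * (x 1)^3 - a * (x 1)^4) * h1 + (x 1)^4 * h0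
    calc (C δ4 * X 0^4 + C δ3 * X 0^3 * X 1 + C δ2 * X 0^2 * X 1^2 + C δ1 * X 0 * X 1^3 + C δ0 * X 1^4 : MvPolynomial (Fin 2) ℂ)
        = C (b^4)⁻¹ * (C (b^4) * (C δ4 * X 0^4 + C δ3 * X 0^3 * X 1 + C δ2 * X 0^2 * X 1^2 + C δ1 * X 0 * X 1^3 + C δ0 * X 1^4)) := by
          rw [← mul_assoc, ← map_mul, inv_mul_cancel₀ (pow_ne_zero 4 hb), map_one, one_mul]
      _ = _ := by rw [key]; ring

end Aux


noncomputable section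

variable (d : ℤ → ℤ → ℝ) (t : ℝ)

set_option maxHeartbeats 4000000 in
/-- for a nondegenerate model, if `([a:b],[c:e])` is a singular point of
the kernel curve `Ē_t`, then `Δ₁` has a double root at `[a:b]` and `Δ₂` has a double
root at `[c:e]`. -/
theorem double_roots_of_singular (h : WalkHyp d t) (hnd : ¬ Degenerate d t)
    (a b c e : ℂ) (hab : (a, b) ≠ (0, 0)) (hce : (c, e) ≠ (0, 0))
    (hs : SingularAt d t a b c e) :
    IsDoubleRootAt a b (Delta1 d t) ∧ IsDoubleRootAt c e (Delta2 d t) := by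
  obtain ⟨-, hP⟩ := hs
  have h0 := hP 0
  have h1 := hP 1
  have h2 := hP 2
  have h3 := hP 3
  simp only [kernelKbar, Finset.sum_range_succ, Finset.sum_range_zero, zero_add, map_sub, map_add,
    map_mul, pderiv_mul, pderiv_C, pderiv_pow, pderiv_X_self,
    pderiv_X_of_ne (show (0:Fin 4) ≠ 1 by decide), pderiv_X_of_ne (show (0:Fin 4) ≠ 2 by decide),
    pderiv_X_of_ne (show (0:Fin 4) ≠ 3 by decide), pderiv_X_of_ne (show (1:Fin 4) ≠ 0 by decide),
    pderiv_X_of_ne (show (1:Fin 4) ≠ 2 by decide), pderiv_X_of_ne (show (1:Fin 4) ≠ 3 by decide),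
    pderiv_X_of_ne (show (2:Fin 4) ≠ 0 by decide), pderiv_X_of_ne (show (2:Fin 4) ≠ 1 by decide),
    pderiv_X_of_ne (show (2:Fin 4) ≠ 3 by decide), pderiv_X_of_ne (show (3:Fin 4) ≠ 0 by decide),
    pderiv_X_of_ne (show (3:Fin 4) ≠ 1 by decide), pderiv_X_of_ne (show (3:Fin 4) ≠ 2 by decide),
    eval_C, eval_X, eval_pow,
    eval_mul, eval_add, eval_sub, Matrix.cons_val_zero, Matrix.cons_val_one, Matrix.head_cons,
    Matrix.cons_val_two, Matrix.tail_cons, Matrix.cons_val_three, Matrix.cons_val_fin_one]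
    at h0 h1 h2 h3
  norm_num at h0 h1 h2 h3
  constructor
  · have hy0A : 2*(-(((t : ℝ) : ℂ)*(((d (1) (1) : ℝ) : ℂ)*a^2 + ((d (0) (1) : ℝ) : ℂ)*a*b + ((d (-1) (1) : ℝ) : ℂ)*b^2)))*c + (a*b - ((t : ℝ) : ℂ)*(((d (1) (0) : ℝ) : ℂ)*a^2 + ((d (0) (0) : ℝ) : ℂ)*a*b + ((d (-1) (0) : ℝ) : ℂ)*b^2))*e = 0 := by linear_combination h2
    have hy1A : (a*b - ((t : ℝ) : ℂ)*(((d (1) (0) : ℝ) : ℂ)*a^2 + ((d (0) (0) : ℝ) : ℂ)*a*b + ((d (-1) (0) : ℝ) : ℂ)*b^2))*c + 2*(-(((t : ℝ) : ℂ)*(((d (1) (-1) : ℝ) : ℂ)*a^2 + ((d (0) (-1) : ℝ) : ℂ)*a*b + ((d (-1) (-1) : ℝ) : ℂ)*b^2)))*e = 0 := by linear_combination h3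
    have hx0A : (-(((t : ℝ) : ℂ)*(2*((d (1) (1) : ℝ) : ℂ)*a + ((d (0) (1) : ℝ) : ℂ)*b)))*c^2 + (b - ((t : ℝ) : ℂ)*(2*((d (1) (0) : ℝ) : ℂ)*a + ((d (0) (0) : ℝ) : ℂ)*b))*c*e + (-(((t : ℝ) : ℂ)*(2*((d (1) (-1) : ℝ) : ℂ)*a + ((d (0) (-1) : ℝ) : ℂ)*b)))*e^2 = 0 := by linear_combination h0
    have hx1A : (-(((t : ℝ) : ℂ)*(((d (0) (1) : ℝ) : ℂ)*a + 2*((d (-1) (1) : ℝ) : ℂ)*b)))*c^2 + (a - ((t : ℝ) : ℂ)*(((d (0) (0) : ℝ) : ℂ)*a + 2*((d (-1) (0) : ℝ) : ℂ)*b))*c*e + (-(((t : ℝ) : ℂ)*(((d (0) (-1) : ℝ) : ℂ)*a + 2*((d (-1) (-1) : ℝ) : ℂ)*b)))*e^2 = 0 := by linear_combination h1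
    obtain ⟨g1A, g2A, g3A⟩ := scalar_aux _ _ _ _ _ _ _ _ _ c e hce hx0A hx1A hy0A hy1A
    have hAA : Abar1 d t = C (-(((t : ℝ) : ℂ)*((d (1) (1) : ℝ) : ℂ))) * X 0^2 + C (-(((t : ℝ) : ℂ)*((d (0) (1) : ℝ) : ℂ))) * X 0 * X 1 + C (-(((t : ℝ) : ℂ)*((d (-1) (1) : ℝ) : ℂ))) * X 1^2 := by
      simp only [Abar1, map_neg, map_mul, map_add, map_one, map_sub]; ring
    have hBA : Bbar1 d t = C (-(((t : ℝ) : ℂ)*((d (1) (0) : ℝ) : ℂ))) * X 0^2 + C (1 - ((t : ℝ) : ℂ)*((d (0) (0) : ℝ) : ℂ)) * X 0 * X 1 + C (-(((t : ℝ) : ℂ)*((d (-1) (0) : ℝ) : ℂ))) * X 1^2 := by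
      simp only [Bbar1, map_neg, map_mul, map_add, map_one, map_sub]; ring
    have hCA : Cbar1 d t = C (-(((t : ℝ) : ℂ)*((d (1) (-1) : ℝ) : ℂ))) * X 0^2 + C (-(((t : ℝ) : ℂ)*((d (0) (-1) : ℝ) : ℂ))) * X 0 * X 1 + C (-(((t : ℝ) : ℂ)*((d (-1) (-1) : ℝ) : ℂ))) * X 1^2 := by
      simp only [Cbar1, map_neg, map_mul, map_add, map_one, map_sub]; ring
    have hDA : Delta1 d t = C ((-(((t : ℝ) : ℂ)*((d (1) (0) : ℝ) : ℂ)))^2-4*(-(((t : ℝ) : ℂ)*((d (1) (1) : ℝ) : ℂ)))*(-(((t : ℝ) : ℂ)*((d (1) (-1) : ℝ) : ℂ)))) * X 0^4 + C (2*(-(((t : ℝ) : ℂ)*((d (1) (0) : ℝ) : ℂ)))*(1 - ((t : ℝ) : ℂ)*((d (0) (0) : ℝ) : ℂ))-4*((-(((t : ℝ) : ℂ)*((d (1) (1) : ℝ) : ℂ)))*(-(((t : ℝ) : ℂ)*((d (0) (-1) : ℝ) : ℂ)))+(-(((t : ℝ) : ℂ)*((d (0) (1) : ℝ) : ℂ)))*(-(((t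 : ℝ) : ℂ)*((d (1) (-1) : ℝ) : ℂ))))) * X 0^3*X 1 + C ((1 - ((t : ℝ) : ℂ)*((d (0) (0) : ℝ) : ℂ))^2+2*(-(((t : ℝ) : ℂ)*((d (1) (0) : ℝ) : ℂ)))*(-(((t : ℝ) : ℂ)*((d (-1) (0) : ℝ) : ℂ)))-4*((-(((t : ℝ) : ℂ)*((d (1) (1) : ℝ) : ℂ)))*(-(((t : ℝ) : ℂ)*((d (-1) (-1) : ℝ) : ℂ)))+(-(((t : ℝ) : ℂ)*((d (0) (1) : ℝ) : ℂ)))*(-(((t : ℝ) : ℂ)*((d (0) (-1) : ℝ) : ℂ)))+(-(((t : ℝ) : ℂ)*((d (-1) (1) : ℝ) : ℂ)))*(-(((t : ℝ) : ℂ)*((d (1) (-1) : ℝ) : ℂ))))) * X 0^2*X 1^2 + C (2*(1 - ((t : ℝ) : ℂ)*((d (0) (0) : ℝ) : ℂ))*(-(((t : ℝ) : ℂ)*((d (-1) (0) : ℝ) : ℂ)))-4*((-(((t : ℝ) : ℂ)*((d (0) (1) : ℝ) : ℂ)))*(-(((t : ℝ) : ℂ)*((d (-1) (-1) : ℝ)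 : ℂ)))+(-(((t : ℝ) : ℂ)*((d (-1) (1) : ℝ) : ℂ)))*(-(((t : ℝ) : ℂ)*((d (0) (-1) : ℝ) : ℂ))))) * X 0*X 1^3 + C ((-(((t : ℝ) : ℂ)*((d (-1) (0) : ℝ) : ℂ)))^2-4*(-(((t : ℝ) : ℂ)*((d (-1) (1) : ℝ) : ℂ)))*(-(((t : ℝ) : ℂ)*((d (-1) (-1) : ℝ) : ℂ)))) * X 1^4 := by
      rw [Delta1, hAA, hBA, hCA, quad_delta]
    show (C b * X 0 - C a * X 1)^2 ∣ Delta1 d t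
    rw [hDA]
    refine aux_div a b _ _ _ _ _ hab ?_ ?_ ?_
    · linear_combination g1A
    · linear_combination g2A
    · linear_combination g3A
  · have hy0B : 2*(-(((t : ℝ) : ℂ)*(((d (1) (1) : ℝ) : ℂ)*c^2 + ((d (1) (0) : ℝ) : ℂ)*c*e + ((d (1) (-1) : ℝ) : ℂ)*e^2)))*a + (c*e - ((t : ℝ) : ℂ)*(((d (0) (1) : ℝ) : ℂ)*c^2 + ((d (0) (0) : ℝ) : ℂ)*c*e + ((d (0) (-1) : ℝ) : ℂ)*e^2))*b = 0 := by linear_combination h0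
    have hy1B : (c*e - ((t : ℝ) : ℂ)*(((d (0) (1) : ℝ) : ℂ)*c^2 + ((d (0) (0) : ℝ) : ℂ)*c*e + ((d (0) (-1) : ℝ) : ℂ)*e^2))*a + 2*(-(((t : ℝ) : ℂ)*(((d (-1) (1) : ℝ) : ℂ)*c^2 + ((d (-1) (0) : ℝ) : ℂ)*c*e + ((d (-1) (-1) : ℝ) : ℂ)*e^2)))*b = 0 := by linear_combination h1
    have hx0B : (-(((t : ℝ) : ℂ)*(2*((d (1) (1) : ℝ) : ℂ)*c + ((d (1) (0) : ℝ) : ℂ)*e)))*a^2 + (e - ((t : ℝ) : ℂ)*(2*((d (0) (1) : ℝ) : ℂ)*c + ((d (0) (0) : ℝ) : ℂ)*e))*a*b + (-(((t : ℝ) : ℂ)*(2*((d (-1) (1) : ℝ) : ℂ)*c + ((d (-1) (0) : ℝ) : ℂ)*e)))*b^2 = 0 := by linear_combination h2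
    have hx1B : (-(((t : ℝ) : ℂ)*(((d (1) (0) : ℝ) : ℂ)*c + 2*((d (1) (-1) : ℝ) : ℂ)*e)))*a^2 + (c - ((t : ℝ) : ℂ)*(((d (0) (0) : ℝ) : ℂ)*c + 2*((d (0) (-1) : ℝ) : ℂ)*e))*a*b + (-(((t : ℝ) : ℂ)*(((d (-1) (0) : ℝ) : ℂ)*c + 2*((d (-1) (-1) : ℝ) : ℂ)*e)))*b^2 = 0 := by linear_combination h3
    obtain ⟨g1B, g2B, g3B⟩ := scalar_aux _ _ _ _ _ _ _ _ _ a b hab hx0B hx1B hy0B hy1B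
    have hAB : Abar2 d t = C (-(((t : ℝ) : ℂ)*((d (1) (1) : ℝ) : ℂ))) * X 0^2 + C (-(((t : ℝ) : ℂ)*((d (1) (0) : ℝ) : ℂ))) * X 0 * X 1 + C (-(((t : ℝ) : ℂ)*((d (1) (-1) : ℝ) : ℂ))) * X 1^2 := by
      simp only [Abar2, map_neg, map_mul, map_add, map_one, map_sub]; ring
    have hBB : Bbar2 d t = C (-(((t : ℝ) : ℂ)*((d (0) (1) : ℝ) : ℂ))) * X 0^2 + C (1 - ((t : ℝ) : ℂ)*((d (0) (0) : ℝ) : ℂ)) * X 0 * X 1 + C (-(((t : ℝ) : ℂ)*((d (0) (-1) : ℝ) : ℂ))) * X 1^2 := by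
      simp only [Bbar2, map_neg, map_mul, map_add, map_one, map_sub]; ring
    have hCB : Cbar2 d t = C (-(((t : ℝ) : ℂ)*((d (-1) (1) : ℝ) : ℂ))) * X 0^2 + C (-(((t : ℝ) : ℂ)*((d (-1) (0) : ℝ) : ℂ))) * X 0 * X 1 + C (-(((t : ℝ) : ℂ)*((d (-1) (-1) : ℝ) : ℂ))) * X 1^2 := by
      simp only [Cbar2, map_neg, map_mul, map_add, map_one, map_sub]; ring
    have hDB : Delta2 d t = C ((-(((t : ℝ) : ℂ)*((d (0) (1) : ℝ) : ℂ)))^2-4*(-(((t : ℝ) : ℂ)*((d (1) (1) : ℝ) : ℂ)))*(-(((t : ℝ) : ℂ)*((d (-1) (1) : ℝ) : ℂ)))) * X 0^4 + C (2*(-(((t : ℝ) : ℂ)*((d (0) (1) : ℝ) : ℂ)))*(1 - ((t : ℝ) : ℂ)*((d (0) (0) : ℝ) : ℂ))-4*((-(((t : ℝ) : ℂ)*((d (1) (1) : ℝ) : ℂ)))*(-(((t : ℝ) : ℂ)*((d (-1) (0) : ℝ) : ℂ)))+(-(((t : ℝ) : ℂ)*((d (1) (0) : ℝ) : ℂ)))*(-(((t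 : ℝ) : ℂ)*((d (-1) (1) : ℝ) : ℂ))))) * X 0^3*X 1 + C ((1 - ((t : ℝ) : ℂ)*((d (0) (0) : ℝ) : ℂ))^2+2*(-(((t : ℝ) : ℂ)*((d (0) (1) : ℝ) : ℂ)))*(-(((t : ℝ) : ℂ)*((d (0) (-1) : ℝ) : ℂ)))-4*((-(((t : ℝ) : ℂ)*((d (1) (1) : ℝ) : ℂ)))*(-(((t : ℝ) : ℂ)*((d (-1) (-1) : ℝ) : ℂ)))+(-(((t : ℝ) : ℂ)*((d (1) (0) : ℝ) : ℂ)))*(-(((t : ℝ) : ℂ)*((d (-1) (0) : ℝ) : ℂ)))+(-(((t : ℝ) : ℂ)*((d (1) (-1) : ℝ) : ℂ)))*(-(((t : ℝ) : ℂ)*((d (-1) (1) : ℝ) : ℂ))))) * X 0^2*X 1^2 + C (2*(1 - ((t : ℝ) : ℂ)*((d (0) (0) : ℝ) : ℂ))*(-(((t : ℝ) : ℂ)*((d (0) (-1) : ℝ) : ℂ)))-4*((-(((t : ℝ) : ℂ)*((d (1) (0) : ℝ) : ℂ)))*(-(((t : ℝ) : ℂ)*((d (-1) (-1) : ℝ)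 : ℂ)))+(-(((t : ℝ) : ℂ)*((d (1) (-1) : ℝ) : ℂ)))*(-(((t : ℝ) : ℂ)*((d (-1) (0) : ℝ) : ℂ))))) * X 0*X 1^3 + C ((-(((t : ℝ) : ℂ)*((d (0) (-1) : ℝ) : ℂ)))^2-4*(-(((t : ℝ) : ℂ)*((d (1) (-1) : ℝ) : ℂ)))*(-(((t : ℝ) : ℂ)*((d (-1) (-1) : ℝ) : ℂ)))) * X 1^4 := by
      rw [Delta2, hAB, hBB, hCB, quad_delta]
    show (C e * X 0 - C c * X 1)^2 ∣ Delta2 d t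
    rw [hDB]
    refine aux_div c e _ _ _ _ _ hce ?_ ?_ ?_
    · linear_combination g1B
    · linear_combination g2B
    · linear_combination g3B

end
end
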